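/- arXiv:2007.05139 — 4 statements merged into one kernel-verified Lean document; each statement's English description precedes it below -/
import Mathlib

section
/- If X_1,…,X_n forms a Markov chain and K = {1}, then a rate R is achievable if and only if R ≤ (1/n) ∑_{i=1}^{n} ∑_{a∈𝒳} min_{u} P(X_i = a | X_1 = u), where the minimum is over u ∈ 𝒳 with P(X_1 = u) > 0. -/
open Finset
open scoped Classical

noncomputable section

namespace GenotypeHiding

variable {X : Type} [Fintype X] [DecidableEq X]

/-- `y` agrees with the history `h` on all coordinates `j` with `j < t`
(i.e. the event `Y_{[t]} = h_{[t]}`, zero-based). -/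
def agreeN {n : ℕ} (t : ℕ) (y h : Fin n → Option X) : Prop :=
  ∀ j : Fin n, (j : ℕ) < t → y j = h j

/-- `P(X = x, Y_{[t]} = h_{[t]})` under the joint law `J` of `(X, Y)`. -/
def prXH {n : ℕ} (J : (Fin n → X) → (Fin n → Option X) → ℝ) (t : ℕ)
    (x : Fin n → X) (h : Fin n → Option X) : ℝ :=
  ∑ y : Fin n → Option X, if agreeN t y h then J x y else 0

/-- `P(Y_i = b, X = x, Y_{[t]} = h_{[t]})` under the joint law `J`. -/
def prXHY {n : ℕ} (J : (Fin n → X) → (Fin n → Option X) → ℝ) (t : ℕ)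
    (x : Fin n → X) (h : Fin n → Option X) (i : Fin n) (b : Option X) : ℝ :=
  ∑ y : Fin n → Option X, if y i = b ∧ agreeN t y h then J x y else 0

/-- `P(Y_{[t]} = h_{[t]})` under the joint law `J`. -/
def prH {n : ℕ} (J : (Fin n → X) → (Fin n → Option X) → ℝ) (t : ℕ)
    (h : Fin n → Option X) : ℝ :=
  ∑ x : Fin n → X, prXH J t x h

/-- `P(X_{i₀} = u, Y_{[t]} = h_{[t]})` under the joint law `J` (here `i₀` is the single
sensitive position). -/
def pr1H {n : ℕ} (J : (Fin n → X) → (Fin n → Option X) → ℝ) (i₀ : Fin n) (t : ℕ)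
    (u : X) (h : Fin n → Option X) : ℝ :=
  ∑ x : Fin n → X, ∑ y : Fin n → Option X,
    if x i₀ = u ∧ agreeN t y h then J x y else 0

/-- `P(X_i = a, X_{i₀} = u, Y_{[t]} = h_{[t]})` under the joint law `J`. -/
def prI1H {n : ℕ} (J : (Fin n → X) → (Fin n → Option X) → ℝ) (i₀ : Fin n) (t : ℕ)
    (i : Fin n) (a : X) (u : X) (h : Fin n → Option X) : ℝ :=
  ∑ x : Fin n → X, ∑ y : Fin n → Option X,
    if x i = a ∧ x i₀ = u ∧ agreeN t y h then J x y else 0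

/-- `P(X_i = a | X_{i₀} = u, Y_{[t]} = h_{[t]})` under the joint law `J`. -/
def cond1 {n : ℕ} (J : (Fin n → X) → (Fin n → Option X) → ℝ) (i₀ : Fin n) (t : ℕ)
    (i : Fin n) (a : X) (u : X) (h : Fin n → Option X) : ℝ :=
  prI1H J i₀ t i a u h / pr1H J i₀ t u h

/-- `min_u P(X_i = a | X_{i₀} = u, Y_{[t]} = h_{[t]})`, the minimum being over all `u` with
`P(X_{i₀} = u, Y_{[t]} = h_{[t]}) > 0`. -/
def minC1 {n : ℕ} (J : (Fin n → X) → (Fin n → Option X) → ℝ) (i₀ : Fin n) (t : ℕ)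
    (i : Fin n) (a : X) (h : Fin n → Option X) : ℝ :=
  sInf {r : ℝ | ∃ u : X, 0 < pr1H J i₀ t u h ∧ r = cond1 J i₀ t i a u h}

/-- `J` is the joint law of `(X, Y)` where `Y` is generated from `X ∼ p` by the sequential
privacy mechanism with the single sensitive position `K = {i₀}`. -/
def IsSequentialMechanism1 {n : ℕ} (p : (Fin n → X) → ℝ) (i₀ : Fin n)
    (J : (Fin n → X) → (Fin n → Option X) → ℝ) : Prop :=
  (∀ x y, 0 ≤ J x y) ∧
  (∀ x, ∑ y : Fin n → Option X, J x y = p x) ∧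
  (∀ x y, 0 < J x y → ∀ i : Fin n, y i = some (x i) ∨ y i = none) ∧
  (∀ (i : Fin n) (x : Fin n → X) (h : Fin n → Option X), 0 < prXH J (i : ℕ) x h →
    prXHY J (i : ℕ) x h i (some (x i))
      = (minC1 J i₀ (i : ℕ) i (x i) h / cond1 J i₀ (i : ℕ) i (x i) (x i₀) h)
          * prXH J (i : ℕ) x h)

/-- `P(X_{[t]} = v_{[t]})`: the probability that the first `t` coordinates of `X` agree
with `v`. -/
def prPre {n : ℕ} (p : (Fin n → X) → ℝ) (t : ℕ) (v : Fin n → X) : ℝ :=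
  ∑ x : Fin n → X, if (∀ j : Fin n, (j : ℕ) < t → x j = v j) then p x else 0

/-- `P(X_i = a)`. -/
def prOne {n : ℕ} (p : (Fin n → X) → ℝ) (i : Fin n) (a : X) : ℝ :=
  ∑ x : Fin n → X, if x i = a then p x else 0

/-- `P(X_i = a ∧ X_{i'} = a')`. -/
def prTwo {n : ℕ} (p : (Fin n → X) → ℝ) (i i' : Fin n) (a a' : X) : ℝ :=
  ∑ x : Fin n → X, if x i = a ∧ x i' = a' then p x else 0

/-- `X_1 → X_2 → ⋯ → X_n` is a Markov chain: for every `t`,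
`P(X_{[t+2]}) ⋅ P(X_{t+1}) = P(X_{[t+1]}) ⋅ P(X_{t+1}, X_{t+2})` (zero-based indices),
which is the cross-multiplied form of the chain rule factorization. -/
def IsMarkov {n : ℕ} (p : (Fin n → X) → ℝ) : Prop :=
  ∀ (t : ℕ) (ht : t + 1 < n) (v : Fin n → X),
    prPre p (t + 2) v * prOne p ⟨t, by omega⟩ (v ⟨t, by omega⟩)
      = prPre p (t + 1) v
          * prTwo p ⟨t, by omega⟩ ⟨t + 1, ht⟩ (v ⟨t, by omega⟩) (v ⟨t + 1, ht⟩)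


/-- `min_u P(X_i = a | X_{i₀} = u)`, the minimum over all `u ∈ 𝒳` with `P(X_{i₀} = u) > 0`. -/
def minCondMC {n : ℕ} (p : (Fin n → X) → ℝ) (i₀ : Fin n) (i : Fin n) (a : X) : ℝ :=
  sInf {r : ℝ | ∃ u : X, 0 < prOne p i₀ u ∧ r = prTwo p i₀ i u a / prOne p i₀ u}

/-- Number of erasures `e(y) = #{i : y_i = ∗}` in an output sequence. -/
def numErasures {n : ℕ} (y : Fin n → Option X) : ℕ :=
  (Finset.univ.filter (fun i : Fin n => y i = none)).card

/-!
Coordinates are indexed from `0`, so the sensitive one is `X_0`; write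
`m_i(a) := min_u P(X_i = a | X_0 = u)`.

Converse: for a faithful mechanism `Y_i = a` forces `X_i = a`, so privacy gives
`P(X_0 = u) P(Y_i = a) = P(X_0 = u, Y_i = a) ≤ P(X_0 = u, X_i = a)`, i.e. `P(Y_i = a) ≤ m_i(a)`.
Summing over `i` and `a` bounds the expected number `n - E[e(Y)]` of revealed symbols.

Achievability: for `t = 0, …, n - 1`, if `x` is still hidden at time `t`, reveal the suffix
`x_t, …, x_{n-1}` (erasing the rest) with a probability depending only on `x_0` and `x_t`;
whatever is still hidden after time `n - 1` is fully erased. The probabilities are chosen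
inductively so that, given `X_0 = u`, the mass of `X_t = a` revealed before time `t` is
`g_t(a) := ∑_b m_{t-1}(b) P(X_t = a | X_{t-1} = b)` and the mass revealed by time `t` is
`m_t(a)`, both independent of `u`. The Markov property gives `g_t(a) ≤ m_t(a)`
(Chapman–Kolmogorov) and makes the revealed suffix independent of `X_0` given `X_t`; hence `Y`
is independent of `X_0`, and the expected number of revealed symbols is `∑_t ∑_a m_t(a)`.
-/

lemma sum_range_mul_sub_succ (h : ℕ → ℝ) (N : ℕ) :
    ∑ t ∈ range N, (t : ℝ) * (h t - h (t + 1)) = ∑ t ∈ range N, h (t + 1) - N * h N := by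
  induction N with
  | zero => simp
  | succ N ih =>
    rw [Finset.sum_range_succ, ih, Finset.sum_range_succ]
    push_cast
    ring

section Marginals

variable {n : ℕ} {p : (Fin n → X) → ℝ}

lemma sum_sum_ite_apply_eq (i : Fin n) (F : (Fin n → X) → ℝ) :
    ∑ b : X, ∑ x : Fin n → X, (if x i = b then F x else 0) = ∑ x, F x := by
  rw [Finset.sum_comm]
  simp

lemma sum_mul_apply_eq (i : Fin n) (F : (Fin n → X) → ℝ) (φ : X → ℝ) :
    ∑ x, F x * φ (x i) = ∑ b : X, (∑ x, if x i = b then F x else 0) * φ b := by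
  rw [← sum_sum_ite_apply_eq i]
  refine Finset.sum_congr rfl fun b _ => ?_
  rw [Finset.sum_mul]
  refine Finset.sum_congr rfl fun x _ => ?_
  split_ifs with h <;> simp [h]

lemma prOne_nonneg (hp0 : ∀ x, 0 ≤ p x) (i : Fin n) (a : X) : 0 ≤ prOne p i a :=
  Finset.sum_nonneg fun x _ => by split_ifs <;> simp [hp0 x]

lemma prTwo_nonneg (hp0 : ∀ x, 0 ≤ p x) (i i' : Fin n) (a a' : X) :
    0 ≤ prTwo p i i' a a' :=
  Finset.sum_nonneg fun x _ => by split_ifs <;> simp [hp0 x]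

lemma sum_prTwo (i i' : Fin n) (a : X) : ∑ a' : X, prTwo p i i' a a' = prOne p i a := by
  rw [prOne, ← sum_sum_ite_apply_eq i' (fun x => if x i = a then p x else 0)]
  refine Finset.sum_congr rfl fun a' _ => Finset.sum_congr rfl fun x _ => ?_
  by_cases h : x i = a <;> simp [h]

lemma sum_prOne (hp1 : ∑ x, p x = 1) (i : Fin n) : ∑ a : X, prOne p i a = 1 :=
  (sum_sum_ite_apply_eq i p).trans hp1

lemma le_prPre (hp0 : ∀ x, 0 ≤ p x) (k : ℕ) (x : Fin n → X) : p x ≤ prPre p k x := by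
  have := Finset.single_le_sum (f := fun x' => if ∀ j : Fin n, (j : ℕ) < k → x' j = x j
    then p x' else 0) (fun x' _ => by split_ifs <;> simp [hp0 x']) (Finset.mem_univ x)
  simpa [prPre] using this

lemma prPre_le_prOne (hp0 : ∀ x, 0 ≤ p x) {k : ℕ} {j : Fin n} (hj : (j : ℕ) < k)
    (v : Fin n → X) : prPre p k v ≤ prOne p j (v j) :=
  Finset.sum_le_sum fun x _ => by
    by_cases h : ∀ i : Fin n, (i : ℕ) < k → x i = v i
    · rw [if_pos h, if_pos (h j hj)]
    · rw [if_neg h]; split_ifs <;> simp [hp0 x]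

lemma prOne_mul_minCondMC_le (hp0 : ∀ x, 0 ≤ p x) (i₀ i : Fin n) (u a : X) :
    prOne p i₀ u * minCondMC p i₀ i a ≤ prTwo p i₀ i u a := by
  rcases (prOne_nonneg hp0 i₀ u).eq_or_lt with hu | hu
  · rw [← hu, zero_mul]
    exact prTwo_nonneg hp0 _ _ _ _
  have hbdd : BddBelow {r : ℝ | ∃ u, 0 < prOne p i₀ u ∧ r = prTwo p i₀ i u a / prOne p i₀ u} :=
    ⟨0, by rintro r ⟨u, hu, rfl⟩; exact div_nonneg (prTwo_nonneg hp0 _ _ _ _) hu.le⟩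
  rw [mul_comm, ← le_div_iff₀ hu]
  exact csInf_le hbdd ⟨u, hu, rfl⟩

lemma le_minCondMC (hp0 : ∀ x, 0 ≤ p x) (hp1 : ∑ x, p x = 1) {i₀ i : Fin n} {a : X} {r : ℝ}
    (h : ∀ u, 0 < prOne p i₀ u → prOne p i₀ u * r ≤ prTwo p i₀ i u a) :
    r ≤ minCondMC p i₀ i a := by
  obtain ⟨u, hu⟩ : ∃ u, 0 < prOne p i₀ u := by
    by_contra! h0
    have := sum_prOne hp1 i₀
    rw [Finset.sum_eq_zero fun u _ => (h0 u).antisymm (prOne_nonneg hp0 i₀ u)] at this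
    exact zero_ne_one this
  refine le_csInf ⟨_, u, hu, rfl⟩ ?_
  rintro _ ⟨u, hu, rfl⟩
  rw [le_div_iff₀ hu, mul_comm]
  exact h u hu

lemma minCondMC_nonneg (hp0 : ∀ x, 0 ≤ p x) (hp1 : ∑ x, p x = 1) (i₀ i : Fin n) (a : X) :
    0 ≤ minCondMC p i₀ i a :=
  le_minCondMC hp0 hp1 fun u _ => by simpa using prTwo_nonneg hp0 _ _ _ _

lemma eq_prOne_mul_sum_of_mem_span (hp1 : ∑ x, p x = 1) {i₀ : Fin n} {G : (Fin n → X) → ℝ}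
    (h : (fun u => ∑ x, if x i₀ = u then G x else 0) ∈ ℝ ∙ prOne p i₀) (u : X) :
    ∑ x, (if x i₀ = u then G x else 0) = prOne p i₀ u * ∑ x, G x := by
  obtain ⟨c, hc⟩ := Submodule.mem_span_singleton.1 h
  have hG : ∑ x, G x = c := by
    rw [← sum_sum_ite_apply_eq i₀, ← hc]
    simp [← Finset.mul_sum, sum_prOne hp1]
  rw [hG, mul_comm, ← congrFun hc u, Pi.smul_apply, smul_eq_mul]

end Marginals

section Converse

variable {n : ℕ} {p : (Fin n → X) → ℝ} {w : (Fin n → X) → (Fin n → Option X) → ℝ}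

lemma sum_ite_some_le_of_faithful (hw0 : ∀ x y, 0 ≤ w x y) (hw1 : ∀ x, ∑ y, w x y = 1)
    (hwf : ∀ x y, 0 < w x y → ∀ i : Fin n, y i = some (x i) ∨ y i = none)
    (x : Fin n → X) (i : Fin n) (a : X) :
    ∑ y, (if y i = some a then w x y else 0) ≤ if x i = a then 1 else 0 := by
  split_ifs with hxa
  · exact (Finset.sum_le_sum fun y _ => by split_ifs <;> simp [hw0 x y]).trans (hw1 x).le
  · refine Finset.sum_nonpos fun y _ => ?_
    split_ifs with hya
    · refine not_lt.1 fun hpos => ?_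
      rcases hwf x y hpos i with h | h <;> rw [hya] at h
      · exact hxa (Option.some_injective _ h).symm
      · exact Option.some_ne_none a h
    · exact le_rfl

lemma prOne_mul_sum_ite_some_le (hp0 : ∀ x, 0 ≤ p x) (hw0 : ∀ x y, 0 ≤ w x y)
    (hw1 : ∀ x, ∑ y, w x y = 1)
    (hwf : ∀ x y, 0 < w x y → ∀ i : Fin n, y i = some (x i) ∨ y i = none) {i₀ : Fin n}
    (hwp : ∀ u y, (∑ x, if x i₀ = u then p x * w x y else 0) = prOne p i₀ u * ∑ x, p x * w x y)
    (i : Fin n) (u a : X) :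
    prOne p i₀ u * ∑ y, (if y i = some a then ∑ x, p x * w x y else 0) ≤ prTwo p i₀ i u a := by
  calc prOne p i₀ u * ∑ y, (if y i = some a then ∑ x, p x * w x y else 0)
      = ∑ x, (if x i₀ = u then p x else 0) * ∑ y, (if y i = some a then w x y else 0) := by
        simp only [Finset.mul_sum, mul_ite, mul_zero, ← hwp]
        rw [Finset.sum_comm]
        refine Finset.sum_congr rfl fun y _ => ?_
        by_cases hy : y i = some a
        · simp only [hy, if_true]
          exact Finset.sum_congr rfl fun x _ => by split_ifs <;> simp
        · simp [hy]
    _ ≤ ∑ x, (if x i₀ = u then p x else 0) * (if x i = a then 1 else 0) :=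
        Finset.sum_le_sum fun x _ => mul_le_mul_of_nonneg_left
          (sum_ite_some_le_of_faithful hw0 hw1 hwf x i a) (by split_ifs <;> simp [hp0 x])
    _ = prTwo p i₀ i u a := by
        refine Finset.sum_congr rfl fun x _ => ?_
        by_cases h0 : x i₀ = u <;> by_cases ha : x i = a <;> simp [h0, ha]

lemma sum_sum_ite_some (y : Fin n → Option X) :
    ∑ i, ∑ a : X, (if y i = some a then (1 : ℝ) else 0) = n - numErasures y := by
  have h : ∀ i, ∑ a : X, (if y i = some a then (1 : ℝ) else 0) = 1 - if y i = none then 1 else 0 :=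
    fun i => by cases y i <;> simp
  simp [h, Finset.sum_sub_distrib, numErasures, Finset.sum_boole]

theorem sub_sum_numErasures_le (hp0 : ∀ x, 0 ≤ p x) (hp1 : ∑ x, p x = 1)
    (hw0 : ∀ x y, 0 ≤ w x y) (hw1 : ∀ x, ∑ y, w x y = 1)
    (hwf : ∀ x y, 0 < w x y → ∀ i : Fin n, y i = some (x i) ∨ y i = none) {i₀ : Fin n}
    (hwp : ∀ u y, (∑ x, if x i₀ = u then p x * w x y else 0) = prOne p i₀ u * ∑ x, p x * w x y) :
    n - ∑ x, ∑ y, p x * w x y * numErasures y ≤ ∑ i, ∑ a, minCondMC p i₀ i a := by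
  have hS : ∑ y, ∑ x, p x * w x y = 1 := by
    rw [Finset.sum_comm]
    simp [← Finset.mul_sum, hw1, hp1]
  calc (n : ℝ) - ∑ x, ∑ y, p x * w x y * numErasures y
      = ∑ y, (∑ x, p x * w x y) * (n - numErasures y) := by
        simp only [mul_sub, Finset.sum_sub_distrib, ← Finset.sum_mul, hS, one_mul]
        rw [Finset.sum_comm]
        simp only [Finset.sum_mul]
    _ = ∑ i, ∑ a, ∑ y, (if y i = some a then ∑ x, p x * w x y else 0) := by
        simp only [← sum_sum_ite_some, Finset.mul_sum, mul_ite, mul_one, mul_zero]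
        rw [Finset.sum_comm]
        exact Finset.sum_congr rfl fun i _ => Finset.sum_comm
    _ ≤ ∑ i, ∑ a, minCondMC p i₀ i a :=
        Finset.sum_le_sum fun i _ => Finset.sum_le_sum fun a _ => le_minCondMC hp0 hp1 fun u _ =>
          prOne_mul_sum_ite_some_le hp0 hw0 hw1 hwf hwp i u a

end Converse

section Markov

variable {n : ℕ} {p : (Fin n → X) → ℝ}

def transition (p : (Fin n → X) → ℝ) {t : ℕ} (ht : t + 1 < n) (b a : X) : ℝ :=
  prTwo p ⟨t, by omega⟩ ⟨t + 1, ht⟩ b a / prOne p ⟨t, by omega⟩ b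

lemma transition_nonneg (hp0 : ∀ x, 0 ≤ p x) {t : ℕ} (ht : t + 1 < n) (b a : X) :
    0 ≤ transition p ht b a :=
  div_nonneg (prTwo_nonneg hp0 _ _ _ _) (prOne_nonneg hp0 _ _)

lemma dependsOn_prPre (k : ℕ) : DependsOn (prPre p k) {j | (j : ℕ) < k} := fun x x' h =>
  Finset.sum_congr rfl fun y _ => by
    congr 1
    exact propext <| forall_congr' fun j => imp_congr_right fun hj => by rw [h j hj]

lemma sum_mul_sum_agree_comm (k : ℕ) {G : (Fin n → X) → ℝ}
    (hG : DependsOn G {j | (j : ℕ) < k}) (q r : (Fin n → X) → ℝ) :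
    ∑ x, G x * q x * ∑ x', (if ∀ j : Fin n, (j : ℕ) < k → x' j = x j then r x' else 0) =
      ∑ x, G x * r x * ∑ x', (if ∀ j : Fin n, (j : ℕ) < k → x' j = x j then q x' else 0) := by
  simp only [Finset.mul_sum, mul_ite, mul_zero]
  rw [Finset.sum_comm]
  refine Finset.sum_congr rfl fun x _ => Finset.sum_congr rfl fun x' _ => ?_
  by_cases h : ∀ j : Fin n, (j : ℕ) < k → x j = x' j
  · rw [if_pos h, if_pos fun j hj => (h j hj).symm, hG fun j hj => (h j hj).symm]
    ring
  · rw [if_neg h, if_neg fun h' => h fun j hj => (h' j hj).symm]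

lemma IsMarkov.sum_prefix_ite_mul_prOne (hM : IsMarkov p) {t : ℕ} (ht : t + 1 < n)
    (v : Fin n → X) (a : X) :
    (∑ x, if ∀ j : Fin n, (j : ℕ) < t + 1 → x j = v j then
        (if x ⟨t + 1, ht⟩ = a then p x else 0) else 0) * prOne p ⟨t, by omega⟩ (v ⟨t, by omega⟩) =
      prPre p (t + 1) v * prTwo p ⟨t, by omega⟩ ⟨t + 1, ht⟩ (v ⟨t, by omega⟩) a := by
  have key := hM t ht (Function.update v ⟨t + 1, ht⟩ a)
  have hne : (⟨t, by omega⟩ : Fin n) ≠ ⟨t + 1, ht⟩ := by simp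
  rw [Function.update_of_ne hne, Function.update_self,
    dependsOn_prPre (t + 1) fun j hj =>
      Function.update_of_ne (fun h => by subst h; simp at hj) _ _] at key
  rw [← key, prPre]
  congr 1
  refine Finset.sum_congr rfl fun x _ => ?_
  rw [← ite_and]
  congr 1
  refine propext ⟨fun ⟨h, hx⟩ j hj => ?_, fun h => ⟨fun j hj => ?_, ?_⟩⟩
  · rcases (Nat.lt_succ_iff_lt_or_eq.mp hj) with hj | hj
    · rw [Function.update_of_ne (fun h => by subst h; simp at hj), h j hj]
    · obtain rfl : j = ⟨t + 1, ht⟩ := Fin.ext hj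
      rw [Function.update_self, hx]
  · rw [h j (by omega), Function.update_of_ne (fun h => by subst h; simp at hj)]
  · simpa using h ⟨t + 1, ht⟩ (by simp)

theorem IsMarkov.sum_ite_succ_eq_sum_transition (hM : IsMarkov p) (hp0 : ∀ x, 0 ≤ p x) {t : ℕ}
    (ht : t + 1 < n) {f : (Fin n → X) → ℝ} (hf : DependsOn f {j | (j : ℕ) ≤ t}) (a : X) :
    ∑ x, (if x ⟨t + 1, ht⟩ = a then p x * f x else 0) =
      ∑ x, p x * f x * transition p ht (x ⟨t, by omega⟩) a := by
  -- Reweighting by `f x / P(X_{≤t} = x_{≤t})` and swapping the sum within prefix classes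
  -- turns both sides into sums of prefix probabilities, where `IsMarkov` applies termwise.
  have hG : DependsOn (fun x => f x / prPre p (t + 1) x) {j | (j : ℕ) < t + 1} := fun x x' h => by
    simp only
    rw [hf fun j hj => h j (Nat.lt_succ_of_le hj), dependsOn_prPre (t + 1) h]
  have key := sum_mul_sum_agree_comm (t + 1) hG p fun x => if x ⟨t + 1, ht⟩ = a then p x else 0
  calc ∑ x, (if x ⟨t + 1, ht⟩ = a then p x * f x else 0)
      = ∑ x, f x / prPre p (t + 1) x * (if x ⟨t + 1, ht⟩ = a then p x else 0) *
          prPre p (t + 1) x := by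
        refine Finset.sum_congr rfl fun x _ => ?_
        rcases (hp0 x).eq_or_lt with hx | hx
        · simp [← hx]
        have hA := hx.trans_le (le_prPre hp0 (t + 1) x)
        split_ifs
        · field_simp
        · simp
    _ = ∑ x, f x / prPre p (t + 1) x * p x * ∑ x', (if ∀ j : Fin n, (j : ℕ) < t + 1 → x' j = x j
          then (if x' ⟨t + 1, ht⟩ = a then p x' else 0) else 0) := key.symm
    _ = ∑ x, p x * f x * transition p ht (x ⟨t, by omega⟩) a := by
        refine Finset.sum_congr rfl fun x _ => ?_
        rcases (hp0 x).eq_or_lt with hx | hx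
        · simp [← hx]
        have hA := hx.trans_le (le_prPre hp0 (t + 1) x)
        have hP := hA.trans_le (prPre_le_prOne hp0 (j := ⟨t, by omega⟩) (by simp) x)
        have e := IsMarkov.sum_prefix_ite_mul_prOne hM ht x a
        rw [transition]
        field_simp
        linear_combination f x * e

theorem IsMarkov.sum_prTwo_mul_transition (hM : IsMarkov p) (hp0 : ∀ x, 0 ≤ p x) {i₀ : Fin n}
    {t : ℕ} (hi₀ : (i₀ : ℕ) ≤ t) (ht : t + 1 < n) (u a : X) :
    ∑ b, prTwo p i₀ ⟨t, by omega⟩ u b * transition p ht b a = prTwo p i₀ ⟨t + 1, ht⟩ u a := by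
  have hf : DependsOn (fun x : Fin n → X => if x i₀ = u then (1 : ℝ) else 0) {j | (j : ℕ) ≤ t} :=
    fun x x' h => by simp only [h i₀ hi₀]
  have step := hM.sum_ite_succ_eq_sum_transition hp0 ht hf a
  rw [sum_mul_apply_eq ⟨t, by omega⟩ _ fun b => transition p ht b a] at step
  have hind : ∀ (j : Fin n) (b : X) (x : Fin n → X), (if x i₀ = u ∧ x j = b then p x else 0) =
      if x j = b then p x * (if x i₀ = u then 1 else 0) else 0 := fun j b x => by
    by_cases h : x i₀ = u <;> simp [h]
  simp only [prTwo, hind, step]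

theorem IsMarkov.sum_window_succ (hM : IsMarkov p) (hp0 : ∀ x, 0 ≤ p x) {t s : ℕ}
    (hs : t + s + 1 < n) (a : Fin n → X) {f : (Fin n → X) → ℝ}
    (hf : DependsOn f {j | (j : ℕ) ≤ t}) :
    ∑ x, (if ∀ j : Fin n, t ≤ j → j ≤ t + s + 1 → x j = a j then p x * f x else 0) =
      transition p hs (a ⟨t + s, by omega⟩) (a ⟨t + s + 1, hs⟩) *
        ∑ x, if ∀ j : Fin n, t ≤ j → j ≤ t + s → x j = a j then p x * f x else 0 := by
  set g : (Fin n → X) → ℝ :=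
    fun x => if ∀ j : Fin n, t ≤ j → j ≤ t + s → x j = a j then f x else 0 with hg_def
  have hg : DependsOn g {j | (j : ℕ) ≤ t + s} := fun x x' h => by
    simp only [hg_def]
    rw [hf fun j hj => h j (by simp only [Set.mem_ofPred_eq] at hj ⊢; omega)]
    refine if_congr (forall_congr' fun j => ?_) rfl rfl
    exact imp_congr_right fun _ => imp_congr_right fun hj => by rw [h j hj]
  calc ∑ x, (if ∀ j : Fin n, t ≤ j → j ≤ t + s + 1 → x j = a j then p x * f x else 0)
      = ∑ x, if x ⟨t + s + 1, hs⟩ = a ⟨t + s + 1, hs⟩ then p x * g x else 0 := by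
        refine Finset.sum_congr rfl fun x _ => ?_
        have hiff : (∀ j : Fin n, t ≤ j → j ≤ t + s + 1 → x j = a j) ↔
            x ⟨t + s + 1, hs⟩ = a ⟨t + s + 1, hs⟩ ∧
              ∀ j : Fin n, t ≤ j → j ≤ t + s → x j = a j := by
          refine ⟨fun h => ⟨h _ (by simp; omega) (by simp),
            fun j h1 h2 => h j h1 (by omega)⟩, fun ⟨h0, h⟩ j h1 h2 => ?_⟩
          rcases Nat.lt_or_ge j (t + s + 1) with hj | hj
          · exact h j h1 (by omega)
          · obtain rfl : j = ⟨t + s + 1, hs⟩ := Fin.ext (by simp; omega)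
            exact h0
        rw [if_congr hiff rfl rfl, ite_and, hg_def]
        simp only [mul_ite, mul_zero]
    _ = ∑ x, p x * g x * transition p hs (a ⟨t + s, by omega⟩) (a ⟨t + s + 1, hs⟩) := by
        rw [hM.sum_ite_succ_eq_sum_transition hp0 hs hg]
        refine Finset.sum_congr rfl fun x _ => ?_
        by_cases h : ∀ j : Fin n, t ≤ j → j ≤ t + s → x j = a j
        · rw [h ⟨t + s, by omega⟩ (by simp) (by simp)]
        · simp [hg_def, h]
    _ = _ := by
        rw [← Finset.sum_mul, mul_comm]
        congr 1
        refine Finset.sum_congr rfl fun x _ => ?_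
        simp only [hg_def, mul_ite, mul_zero]

theorem IsMarkov.exists_sum_window (hM : IsMarkov p) (hp0 : ∀ x, 0 ≤ p x) {t : ℕ} (ht : t < n)
    (a : Fin n → X) (s : ℕ) (hs : t + s < n) :
    ∃ c : ℝ, ∀ f : (Fin n → X) → ℝ, DependsOn f {j | (j : ℕ) ≤ t} →
      ∑ x, (if ∀ j : Fin n, t ≤ j → j ≤ t + s → x j = a j then p x * f x else 0) =
        c * ∑ x, if x ⟨t, ht⟩ = a ⟨t, ht⟩ then p x * f x else 0 := by
  induction s with
  | zero =>
    refine ⟨1, fun f _ => ?_⟩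
    rw [one_mul]
    refine Finset.sum_congr rfl fun x _ => if_congr ⟨fun h => h _ le_rfl le_rfl, ?_⟩ rfl rfl
    intro h j h1 h2
    obtain rfl : j = ⟨t, ht⟩ := Fin.ext (by simp; omega)
    exact h
  | succ s ih =>
    obtain ⟨c, hc⟩ := ih (by omega)
    exact ⟨transition p hs (a ⟨t + s, by omega⟩) (a ⟨t + s + 1, hs⟩) * c, fun f hf =>
      (hM.sum_window_succ hp0 hs a hf).trans (by rw [hc f hf, mul_assoc])⟩

theorem IsMarkov.exists_sum_suffix (hM : IsMarkov p) (hp0 : ∀ x, 0 ≤ p x) {t : ℕ} (ht : t < n)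
    (a : Fin n → X) : ∃ c : ℝ, ∀ f : (Fin n → X) → ℝ, DependsOn f {j | (j : ℕ) ≤ t} →
      ∑ x, (if ∀ j : Fin n, t ≤ j → x j = a j then p x * f x else 0) =
        c * ∑ x, if x ⟨t, ht⟩ = a ⟨t, ht⟩ then p x * f x else 0 := by
  obtain ⟨c, hc⟩ := hM.exists_sum_window hp0 ht a (n - 1 - t) (by omega)
  refine ⟨c, fun f hf => (Finset.sum_congr rfl fun x _ => if_congr ?_ rfl rfl).trans (hc f hf)⟩
  exact forall_congr' fun j => ⟨fun h hj _ => h hj, fun h hj => h hj (by omega)⟩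

end Markov

section Mechanism

variable {n : ℕ} (hn : 1 ≤ n) (p : (Fin n → X) → ℝ)

-- `revealedBefore t a` is `g_t(a)`, the mass of `X_t = a` revealed before time `t` given
-- `X_0 = u`.
def revealedBefore : ℕ → X → ℝ
  | 0, _ => 0
  | t + 1, a => if ht : t + 1 < n then
      ∑ b, minCondMC p ⟨0, hn⟩ ⟨t, by omega⟩ b * transition p ht b a else 0

-- The fraction of the still-hidden mass of `{X_0 = u, X_t = a}` (see `sum_ite_hiddenProb`)
-- that must be revealed at time `t` for the mass revealed by time `t` to reach
-- `P(X_0 = u) * m_t(a)`.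
def revealProb {t : ℕ} (ht : t < n) (u a : X) : ℝ :=
  prOne p ⟨0, hn⟩ u * (minCondMC p ⟨0, hn⟩ ⟨t, ht⟩ a - revealedBefore hn p t a) /
    (prTwo p ⟨0, hn⟩ ⟨t, ht⟩ u a - prOne p ⟨0, hn⟩ u * revealedBefore hn p t a)

-- At time `n` whatever is still hidden is output fully erased (`revealFrom n x` is all `none`).
def revealRate (t : ℕ) (x : Fin n → X) : ℝ :=
  if ht : t < n then revealProb hn p ht (x ⟨0, hn⟩) (x ⟨t, ht⟩) else 1

def hiddenProb : ℕ → (Fin n → X) → ℝ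
  | 0, _ => 1
  | t + 1, x => hiddenProb t x * (1 - revealRate hn p t x)

def revealFrom (t : ℕ) (x : Fin n → X) : Fin n → Option X :=
  fun j => if t ≤ j then some (x j) else none

def suffixMechanism (x : Fin n → X) (y : Fin n → Option X) : ℝ :=
  ∑ t ∈ range (n + 1),
    if y = revealFrom t x then hiddenProb hn p t x * revealRate hn p t x else 0

lemma dependsOn_revealRate (t : ℕ) : DependsOn (revealRate hn p t) {j | (j : ℕ) ≤ t} :=
  fun x x' h => by
    unfold revealRate
    split_ifs with ht
    · rw [h ⟨0, hn⟩ (Nat.zero_le t), h ⟨t, ht⟩ (le_refl t)]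
    · rfl

lemma dependsOn_hiddenProb_succ (t : ℕ) :
    DependsOn (hiddenProb hn p (t + 1)) {j | (j : ℕ) ≤ t} := by
  induction t with
  | zero => exact fun x x' h => by simp only [hiddenProb, dependsOn_revealRate hn p 0 h]
  | succ t ih =>
    exact fun x x' h => congrArg₂ (fun a b => a * (1 - b))
      (ih fun j hj => h j (by simp at hj ⊢; omega)) (dependsOn_revealRate hn p (t + 1) h)

lemma dependsOn_hiddenProb (t : ℕ) : DependsOn (hiddenProb hn p t) {j | (j : ℕ) ≤ t} := by
  cases t with
  | zero => exact fun _ _ _ => rfl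
  | succ t => exact (dependsOn_hiddenProb_succ hn p t).mono fun j hj => by simp at hj ⊢; omega

lemma sum_ite_hiddenProb_succ_eq_mul {t : ℕ} (ht : t < n) (u a : X) :
    ∑ x, (if x ⟨0, hn⟩ = u ∧ x ⟨t, ht⟩ = a then p x * hiddenProb hn p (t + 1) x else 0) =
      (∑ x, if x ⟨0, hn⟩ = u ∧ x ⟨t, ht⟩ = a then p x * hiddenProb hn p t x else 0) *
        (1 - revealProb hn p ht u a) := by
  rw [Finset.sum_mul]
  refine Finset.sum_congr rfl fun x _ => ?_
  split_ifs with h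
  · rw [hiddenProb, revealRate, dif_pos ht, h.1, h.2, mul_assoc]
  · rw [zero_mul]

lemma hiddenProb_sub_succ (t : ℕ) (x : Fin n → X) :
    hiddenProb hn p t x - hiddenProb hn p (t + 1) x =
      hiddenProb hn p t x * revealRate hn p t x := by
  rw [hiddenProb]
  ring

lemma hiddenProb_succ_self_eq_zero (x : Fin n → X) : hiddenProb hn p (n + 1) x = 0 := by
  rw [hiddenProb, revealRate, dif_neg (lt_irrefl n), sub_self, mul_zero]

lemma sum_suffixMechanism (x : Fin n → X) : ∑ y, suffixMechanism hn p x y = 1 := by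
  simp only [suffixMechanism]
  rw [Finset.sum_comm]
  simp only [Finset.sum_ite_eq', Finset.mem_univ, if_true, ← hiddenProb_sub_succ]
  rw [Finset.sum_range_sub', hiddenProb_succ_self_eq_zero, hiddenProb, sub_zero]

lemma suffixMechanism_faithful {x : Fin n → X} {y : Fin n → Option X}
    (h : 0 < suffixMechanism hn p x y) (i : Fin n) : y i = some (x i) ∨ y i = none := by
  obtain ⟨t, -, ht⟩ := Finset.exists_ne_zero_of_sum_ne_zero h.ne'
  obtain rfl : y = revealFrom t x := by by_contra hy; exact ht (if_neg hy)
  unfold revealFrom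
  split_ifs <;> simp

omit [Fintype X] [DecidableEq X] in
lemma numErasures_revealFrom {t : ℕ} (ht : t ≤ n) (x : Fin n → X) :
    numErasures (revealFrom t x) = t := by
  simp [numErasures, revealFrom, Fin.card_filter_val_lt, ht]

omit [Fintype X] [DecidableEq X] in
lemma revealFrom_eq_revealFrom_iff {t : ℕ} {x x' : Fin n → X} :
    revealFrom t x = revealFrom t x' ↔ ∀ j : Fin n, t ≤ j → x j = x' j := by
  simp only [funext_iff, revealFrom]
  refine forall_congr' fun j => ?_
  split_ifs with h <;> simp [h]

lemma sum_suffixMechanism_mul_numErasures (x : Fin n → X) :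
    ∑ y, suffixMechanism hn p x y * numErasures y = ∑ i : Fin n, hiddenProb hn p (i + 1) x := by
  simp only [suffixMechanism, Finset.sum_mul, ite_mul, zero_mul]
  rw [Finset.sum_comm]
  simp only [Finset.sum_ite_eq', Finset.mem_univ, if_true]
  rw [Finset.sum_congr rfl fun t ht => by
      rw [numErasures_revealFrom (Nat.lt_succ_iff.mp (Finset.mem_range.mp ht)), mul_comm,
        ← hiddenProb_sub_succ],
    sum_range_mul_sub_succ, hiddenProb_succ_self_eq_zero, mul_zero, sub_zero,
    Finset.sum_range_succ, hiddenProb_succ_self_eq_zero, add_zero,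
    Fin.sum_univ_eq_sum_range (fun t => hiddenProb hn p (t + 1) x)]

variable {p} (hp0 : ∀ x, 0 ≤ p x) (hp1 : ∑ x, p x = 1) (hM : IsMarkov p)
include hp0 hp1 hM

lemma revealedBefore_le_minCondMC {t : ℕ} (ht : t < n) (a : X) :
    revealedBefore hn p t a ≤ minCondMC p ⟨0, hn⟩ ⟨t, ht⟩ a := by
  cases t with
  | zero => exact minCondMC_nonneg hp0 hp1 _ _ _
  | succ t =>
    refine le_minCondMC hp0 hp1 fun u _ => ?_
    rw [revealedBefore, dif_pos ht, Finset.mul_sum,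
      ← hM.sum_prTwo_mul_transition hp0 (Nat.zero_le t) ht]
    refine Finset.sum_le_sum fun b _ => ?_
    rw [← mul_assoc]
    exact mul_le_mul_of_nonneg_right (prOne_mul_minCondMC_le hp0 _ _ _ _)
      (transition_nonneg hp0 ht _ _)

lemma prOne_mul_sub_revealedBefore_mem_Icc {t : ℕ} (ht : t < n) (u a : X) :
    prOne p ⟨0, hn⟩ u * (minCondMC p ⟨0, hn⟩ ⟨t, ht⟩ a - revealedBefore hn p t a) ∈
      Set.Icc 0 (prTwo p ⟨0, hn⟩ ⟨t, ht⟩ u a - prOne p ⟨0, hn⟩ u * revealedBefore hn p t a) := by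
  have hgm := revealedBefore_le_minCondMC hn hp0 hp1 hM ht a
  have hmQ := prOne_mul_minCondMC_le hp0 ⟨0, hn⟩ ⟨t, ht⟩ u a
  exact ⟨mul_nonneg (prOne_nonneg hp0 _ _) (sub_nonneg.2 hgm), by rw [mul_sub]; linarith⟩

lemma revealProb_mem_Icc {t : ℕ} (ht : t < n) (u a : X) :
    revealProb hn p ht u a ∈ Set.Icc 0 1 :=
  have h := prOne_mul_sub_revealedBefore_mem_Icc hn hp0 hp1 hM ht u a
  ⟨div_nonneg h.1 (h.1.trans h.2), div_le_one_of_le₀ h.2 (h.1.trans h.2)⟩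

lemma sub_mul_revealProb {t : ℕ} (ht : t < n) (u a : X) :
    (prTwo p ⟨0, hn⟩ ⟨t, ht⟩ u a - prOne p ⟨0, hn⟩ u * revealedBefore hn p t a) *
        revealProb hn p ht u a =
      prOne p ⟨0, hn⟩ u * (minCondMC p ⟨0, hn⟩ ⟨t, ht⟩ a - revealedBefore hn p t a) := by
  have h := prOne_mul_sub_revealedBefore_mem_Icc hn hp0 hp1 hM ht u a
  rcases eq_or_ne (prTwo p ⟨0, hn⟩ ⟨t, ht⟩ u a - prOne p ⟨0, hn⟩ u * revealedBefore hn p t a) 0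
    with h0 | h0
  · rw [h0, zero_mul]
    exact (le_antisymm (h0 ▸ h.2) h.1).symm
  · exact mul_div_cancel₀ _ h0

lemma revealRate_mem_Icc (t : ℕ) (x : Fin n → X) : revealRate hn p t x ∈ Set.Icc 0 1 := by
  unfold revealRate
  split_ifs with ht
  · exact revealProb_mem_Icc hn hp0 hp1 hM ht _ _
  · exact ⟨zero_le_one, le_rfl⟩

lemma hiddenProb_nonneg (t : ℕ) (x : Fin n → X) : 0 ≤ hiddenProb hn p t x := by
  induction t with
  | zero => exact zero_le_one
  | succ t ih => exact mul_nonneg ih (sub_nonneg.2 (revealRate_mem_Icc hn hp0 hp1 hM t x).2)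

lemma sum_ite_hiddenProb_succ_of_eq {t : ℕ} (ht : t < n) (u a : X)
    (h : ∑ x, (if x ⟨0, hn⟩ = u ∧ x ⟨t, ht⟩ = a then p x * hiddenProb hn p t x else 0) =
      prTwo p ⟨0, hn⟩ ⟨t, ht⟩ u a - prOne p ⟨0, hn⟩ u * revealedBefore hn p t a) :
    ∑ x, (if x ⟨0, hn⟩ = u ∧ x ⟨t, ht⟩ = a then p x * hiddenProb hn p (t + 1) x else 0) =
      prTwo p ⟨0, hn⟩ ⟨t, ht⟩ u a - prOne p ⟨0, hn⟩ u * minCondMC p ⟨0, hn⟩ ⟨t, ht⟩ a := by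
  rw [sum_ite_hiddenProb_succ_eq_mul, h, mul_one_sub, sub_mul_revealProb hn hp0 hp1 hM]
  ring

theorem sum_ite_hiddenProb {t : ℕ} (ht : t < n) (u a : X) :
    ∑ x, (if x ⟨0, hn⟩ = u ∧ x ⟨t, ht⟩ = a then p x * hiddenProb hn p t x else 0) =
      prTwo p ⟨0, hn⟩ ⟨t, ht⟩ u a - prOne p ⟨0, hn⟩ u * revealedBefore hn p t a := by
  induction t generalizing a with
  | zero => simp [hiddenProb, revealedBefore, prTwo]
  | succ t ih =>
    have hF : DependsOn (fun x => if x ⟨0, hn⟩ = u then hiddenProb hn p (t + 1) x else 0)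
        {j | (j : ℕ) ≤ t} := fun x x' h => by
      simp only [h ⟨0, hn⟩ (Nat.zero_le t), dependsOn_hiddenProb_succ hn p t h]
    have hind : ∀ (j : Fin n) (b : X) (x : Fin n → X),
        (if x ⟨0, hn⟩ = u ∧ x j = b then p x * hiddenProb hn p (t + 1) x else 0) =
          if x j = b then p x * (if x ⟨0, hn⟩ = u then hiddenProb hn p (t + 1) x else 0)
            else 0 := fun j b x => by
      by_cases h : x ⟨0, hn⟩ = u <;> simp [h]
    have hstep := fun b => sum_ite_hiddenProb_succ_of_eq hn hp0 hp1 hM (Nat.lt_of_succ_lt ht) u b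
      (ih _ b)
    simp only [hind] at hstep ⊢
    rw [hM.sum_ite_succ_eq_sum_transition hp0 ht hF,
      sum_mul_apply_eq ⟨t, by omega⟩ _ fun b => transition p ht b a]
    simp only [hstep, sub_mul, Finset.sum_sub_distrib,
      hM.sum_prTwo_mul_transition hp0 (i₀ := ⟨0, hn⟩) (Nat.zero_le t) ht, revealedBefore,
      dif_pos ht, Finset.mul_sum, mul_assoc]

lemma sum_ite_hiddenProb_succ {t : ℕ} (ht : t < n) (u a : X) :
    ∑ x, (if x ⟨0, hn⟩ = u ∧ x ⟨t, ht⟩ = a then p x * hiddenProb hn p (t + 1) x else 0) =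
      prTwo p ⟨0, hn⟩ ⟨t, ht⟩ u a - prOne p ⟨0, hn⟩ u * minCondMC p ⟨0, hn⟩ ⟨t, ht⟩ a :=
  sum_ite_hiddenProb_succ_of_eq hn hp0 hp1 hM ht u a (sum_ite_hiddenProb hn hp0 hp1 hM ht u a)

lemma sum_ite_hiddenProb_succ_marginal {t : ℕ} (ht : t < n) (u : X) :
    ∑ x, (if x ⟨0, hn⟩ = u then p x * hiddenProb hn p (t + 1) x else 0) =
      prOne p ⟨0, hn⟩ u * (1 - ∑ a, minCondMC p ⟨0, hn⟩ ⟨t, ht⟩ a) := by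
  calc _ = ∑ a, ∑ x,
        (if x ⟨0, hn⟩ = u ∧ x ⟨t, ht⟩ = a then p x * hiddenProb hn p (t + 1) x else 0) := by
        rw [← sum_sum_ite_apply_eq ⟨t, ht⟩]
        refine Finset.sum_congr rfl fun a _ => Finset.sum_congr rfl fun x _ => ?_
        rw [← ite_and]
        exact if_congr and_comm rfl rfl
    _ = _ := by
        rw [Finset.sum_congr rfl fun a _ => sum_ite_hiddenProb_succ hn hp0 hp1 hM ht u a,
          Finset.sum_sub_distrib, sum_prTwo, ← Finset.mul_sum, mul_one_sub]

lemma suffixMechanism_nonneg (x : Fin n → X) (y : Fin n → Option X) :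
    0 ≤ suffixMechanism hn p x y :=
  Finset.sum_nonneg fun t _ => by
    split_ifs
    · exact mul_nonneg (hiddenProb_nonneg hn hp0 hp1 hM t x)
        (revealRate_mem_Icc hn hp0 hp1 hM t x).1
    · exact le_rfl

lemma sum_mul_hiddenProb_succ {t : ℕ} (ht : t < n) :
    ∑ x, p x * hiddenProb hn p (t + 1) x = 1 - ∑ a, minCondMC p ⟨0, hn⟩ ⟨t, ht⟩ a := by
  rw [← sum_sum_ite_apply_eq ⟨0, hn⟩,
    Finset.sum_congr rfl fun u _ => sum_ite_hiddenProb_succ_marginal hn hp0 hp1 hM ht u,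
    ← Finset.sum_mul, sum_prOne hp1, one_mul]

theorem sum_suffixMechanism_numErasures :
    ∑ x, ∑ y, p x * suffixMechanism hn p x y * numErasures y =
      n - ∑ i : Fin n, ∑ a, minCondMC p ⟨0, hn⟩ i a := by
  calc ∑ x, ∑ y, p x * suffixMechanism hn p x y * numErasures y
      = ∑ x, p x * ∑ i : Fin n, hiddenProb hn p (i + 1) x := by
        simp only [mul_assoc, ← Finset.mul_sum, sum_suffixMechanism_mul_numErasures]
    _ = ∑ i : Fin n, ∑ x, p x * hiddenProb hn p (i + 1) x := by
        simp only [Finset.mul_sum]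
        exact Finset.sum_comm
    _ = _ := by
        rw [Finset.sum_congr rfl fun i _ => sum_mul_hiddenProb_succ hn hp0 hp1 hM i.isLt]
        simp

lemma sum_ite_revealFrom_mem_span {t : ℕ} (ht : t < n) (y : Fin n → Option X) :
    (fun u => ∑ x, if x ⟨0, hn⟩ = u ∧ y = revealFrom t x then
      p x * (hiddenProb hn p t x * revealRate hn p t x) else 0) ∈ ℝ ∙ prOne p ⟨0, hn⟩ := by
  by_cases hy : ∃ x₁, y = revealFrom t x₁
  swap
  · simp only [not_exists] at hy
    convert zero_mem (ℝ ∙ prOne p ⟨0, hn⟩)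
    simp [hy]
  obtain ⟨x₁, rfl⟩ := hy
  -- Given `X_t`, the revealed suffix contributes a factor `c` that does not depend on `X_0`.
  obtain ⟨c, hc⟩ := hM.exists_sum_suffix hp0 ht x₁
  set a := x₁ ⟨t, ht⟩
  refine Submodule.mem_span_singleton.2
    ⟨c * (minCondMC p ⟨0, hn⟩ ⟨t, ht⟩ a - revealedBefore hn p t a), funext fun u => ?_⟩
  have hf : DependsOn (fun x => if x ⟨0, hn⟩ = u then
      hiddenProb hn p t x * revealRate hn p t x else 0) {j | (j : ℕ) ≤ t} := fun x x' h => by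
    simp only [h ⟨0, hn⟩ (Nat.zero_le t), dependsOn_hiddenProb hn p t h,
      dependsOn_revealRate hn p t h]
  have hsuffix := hc _ hf
  calc _ = c * ((prTwo p ⟨0, hn⟩ ⟨t, ht⟩ u a - prOne p ⟨0, hn⟩ u * revealedBefore hn p t a) *
        revealProb hn p ht u a) := by
        rw [sub_mul_revealProb hn hp0 hp1 hM, Pi.smul_apply, smul_eq_mul]
        ring
    _ = c * ∑ x, (if x ⟨t, ht⟩ = a then p x * (if x ⟨0, hn⟩ = u then
          hiddenProb hn p t x * revealRate hn p t x else 0) else 0) := by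
        rw [← sum_ite_hiddenProb hn hp0 hp1 hM ht, Finset.sum_mul]
        congr 1
        refine Finset.sum_congr rfl fun x _ => ?_
        by_cases h0 : x ⟨0, hn⟩ = u <;> by_cases ha : x ⟨t, ht⟩ = a
        · simp only [h0, ha, and_self, if_true, revealRate, dif_pos ht, mul_assoc]
        all_goals simp [h0, ha]
    _ = _ := by
        rw [← hsuffix]
        refine Finset.sum_congr rfl fun x _ => ?_
        have hiff : revealFrom t x₁ = revealFrom t x ↔ ∀ j : Fin n, t ≤ j → x j = x₁ j :=
          eq_comm.trans revealFrom_eq_revealFrom_iff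
        by_cases h0 : x ⟨0, hn⟩ = u <;> by_cases hs : ∀ j : Fin n, t ≤ j → x j = x₁ j <;>
          simp [h0, hs, hiff]

lemma sum_ite_revealFrom_self_mem_span (y : Fin n → Option X) :
    (fun u => ∑ x, if x ⟨0, hn⟩ = u ∧ y = revealFrom n x then
      p x * (hiddenProb hn p n x * revealRate hn p n x) else 0) ∈ ℝ ∙ prOne p ⟨0, hn⟩ := by
  have hnone : ∀ x : Fin n → X, revealFrom n x = fun _ => none :=
    fun x => funext fun j => if_neg (not_le.2 j.isLt)
  have htotal := sum_ite_hiddenProb_succ_marginal hn hp0 hp1 hM (t := n - 1) (by omega)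
  rw [Nat.sub_add_cancel hn] at htotal
  refine Submodule.mem_span_singleton.2 ⟨if y = fun _ => none then
    1 - ∑ a, minCondMC p ⟨0, hn⟩ ⟨n - 1, by omega⟩ a else 0, funext fun u => ?_⟩
  simp only [hnone, revealRate, dif_neg (lt_irrefl n), mul_one, Pi.smul_apply, smul_eq_mul]
  split_ifs with hy
  · simp only [hy, and_true, htotal, mul_comm]
  · simp [hy]

theorem suffixMechanism_mem_span (y : Fin n → Option X) :
    (fun u => ∑ x, if x ⟨0, hn⟩ = u then p x * suffixMechanism hn p x y else 0) ∈
      ℝ ∙ prOne p ⟨0, hn⟩ := by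
  have hsplit : (fun u => ∑ x, if x ⟨0, hn⟩ = u then p x * suffixMechanism hn p x y else 0) =
      ∑ t ∈ range (n + 1), fun u => ∑ x, if x ⟨0, hn⟩ = u ∧ y = revealFrom t x then
        p x * (hiddenProb hn p t x * revealRate hn p t x) else 0 := by
    funext u
    simp only [Finset.sum_apply, suffixMechanism, Finset.mul_sum, mul_ite, mul_zero]
    rw [Finset.sum_comm]
    refine Finset.sum_congr rfl fun x _ => ?_
    by_cases h0 : x ⟨0, hn⟩ = u <;> simp [h0]
  rw [hsplit]
  refine Submodule.sum_mem _ fun t ht => ?_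
  rcases (Nat.lt_succ_iff.mp (Finset.mem_range.mp ht)).lt_or_eq with ht | rfl
  · exact sum_ite_revealFrom_mem_span hn hp0 hp1 hM ht y
  · exact sum_ite_revealFrom_self_mem_span hn hp0 hp1 hM y

end Mechanism

theorem markov_capacity_general {n : ℕ} (hn : 1 ≤ n)
    (p : (Fin n → X) → ℝ) (hp0 : ∀ x, 0 ≤ p x) (hp1 : ∑ x : Fin n → X, p x = 1)
    (hMarkov : IsMarkov p) (R : ℝ) :
    (∃ w : (Fin n → X) → (Fin n → Option X) → ℝ,
      (∀ x y, 0 ≤ w x y) ∧ (∀ x, ∑ y : Fin n → Option X, w x y = 1) ∧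
      -- faithfulness
      (∀ x y, 0 < w x y → ∀ i : Fin n, y i = some (x i) ∨ y i = none) ∧
      -- privacy: `Y` independent of `X_1`
      (∀ (u : X) (y : Fin n → Option X),
        (∑ x : Fin n → X, if x ⟨0, hn⟩ = u then p x * w x y else 0)
          = prOne p ⟨0, hn⟩ u * ∑ x : Fin n → X, p x * w x y) ∧
      -- rate at least `R`
      R ≤ 1 - (1 / (n : ℝ)) *
            ∑ x : Fin n → X, ∑ y : Fin n → Option X,
              p x * w x y * (numErasures y : ℝ))
    ↔ R ≤ (1 / (n : ℝ)) * ∑ i : Fin n, ∑ a : X, minCondMC p ⟨0, hn⟩ i a := by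
  have hn' : (0 : ℝ) < n := by exact_mod_cast hn
  constructor
  · rintro ⟨w, hw0, hw1, hwf, hwp, hR⟩
    refine hR.trans (le_of_eq_of_le ?_ (mul_le_mul_of_nonneg_left
      (sub_sum_numErasures_le hp0 hp1 hw0 hw1 hwf hwp) (by positivity)))
    field_simp
  · refine fun hR => ⟨suffixMechanism hn p, suffixMechanism_nonneg hn hp0 hp1 hMarkov,
      sum_suffixMechanism hn p, fun x y h => suffixMechanism_faithful hn p h,
      fun u y => eq_prOne_mul_sum_of_mem_span hp1 (suffixMechanism_mem_span hn hp0 hp1 hMarkov y) u,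
      ?_⟩
    rw [sum_suffixMechanism_numErasures hn hp0 hp1 hMarkov]
    convert hR using 1
    field_simp
    ring

/-- Corollary, Markov chain: if `X_1, …, X_n` is a Markov chain and the only
sensitive position is the first one (`K = {1}`, one-based; `i₀ = 0`, zero-based), then a
rate `R` is achievable — i.e. some faithful private mechanism has rate at least `R` —
if and only if `R ≤ (1/n) ∑_i ∑_a min_u P(X_i = a | X_1 = u)`. -/
theorem markov_capacity {n : ℕ} (hn : 1 ≤ n) (hX : 2 ≤ Fintype.card X)
    (p : (Fin n → X) → ℝ) (hp0 : ∀ x, 0 ≤ p x) (hp1 : ∑ x : Fin n → X, p x = 1)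
    (hMarkov : IsMarkov p) (R : ℝ) :
    (∃ w : (Fin n → X) → (Fin n → Option X) → ℝ,
      (∀ x y, 0 ≤ w x y) ∧ (∀ x, ∑ y : Fin n → Option X, w x y = 1) ∧
      -- faithfulness
      (∀ x y, 0 < w x y → ∀ i : Fin n, y i = some (x i) ∨ y i = none) ∧
      -- privacy: `Y` independent of `X_1`
      (∀ (u : X) (y : Fin n → Option X),
        (∑ x : Fin n → X, if x ⟨0, hn⟩ = u then p x * w x y else 0)
          = prOne p ⟨0, hn⟩ u * ∑ x : Fin n → X, p x * w x y) ∧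
      -- rate at least `R`
      R ≤ 1 - (1 / (n : ℝ)) *
            ∑ x : Fin n → X, ∑ y : Fin n → Option X,
              p x * w x y * (numErasures y : ℝ))
    ↔ R ≤ (1 / (n : ℝ)) * ∑ i : Fin n, ∑ a : X, minCondMC p ⟨0, hn⟩ i a :=
  markov_capacity_general hn p hp0 hp1 hMarkov R

end GenotypeHiding
end
end

section
/- Mismatch identity: let q be a full-support probability mass function on 𝒳^n and let w(y|x) be a mechanism such that, under the joint law q(x)·w(y|x), the output Y is independent of X_K. Let p be another probability mass function on 𝒳^n and consider the joint law p(x)·w(y|x). Then the mutual information of (X_K, Y) under p, defined as the Kullback–Leibler divergence D(p_{X_K,Y} ‖ p_{X_K} × p_Y) between the p-joint law of (X_K, Y) and the product of its p-marginals, satisfies D(p_{X_K,Y} ‖ p_{X_K} × p_Y) = D(p_{X_K,Y} ‖ q_{X_K,Y}) − D(p_{X_K} ‖ q_{X_K}) − D(p_Y ‖ q_Y), where subscripts denote the corresponding marginal or joint distributions under p(x)·w(y|x) and q(x)·w(y|x) respectively. -/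
open Finset
open scoped Classical

noncomputable section

namespace GenotypeHiding

variable {X : Type} [Fintype X] [DecidableEq X]

/-- Kullback–Leibler divergence `D(μ ‖ ν) = ∑_z μ(z) log (μ(z)/ν(z))` between two
probability mass functions on a finite set (with the convention `0 log 0 = 0`). -/
def klDiv {Z : Type} [Fintype Z] (μ ν : Z → ℝ) : ℝ :=
  ∑ z : Z, μ z * Real.log (μ z / ν z)

/-- Restriction of a sequence `x` to the sensitive positions `K`. -/
def restr {n : ℕ} (K : Finset (Fin n)) (x : Fin n → X) : ↥K → X := fun i => x (i : Fin n)

/-- The joint law of `(X_K, Y)` induced by the data distribution `p` and the mechanism `w`. -/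
def jointKY {n : ℕ} (p : (Fin n → X) → ℝ) (w : (Fin n → X) → (Fin n → Option X) → ℝ)
    (K : Finset (Fin n)) : (↥K → X) × (Fin n → Option X) → ℝ :=
  fun z => ∑ x : Fin n → X, if restr K x = z.1 then p x * w x z.2 else 0

/-- The marginal law of `X_K` under the data distribution `p`. -/
def margK {n : ℕ} (p : (Fin n → X) → ℝ) (K : Finset (Fin n)) (u : ↥K → X) : ℝ :=
  ∑ x : Fin n → X, if restr K x = u then p x else 0

/-- The marginal law of `Y` induced by the data distribution `p` and the mechanism `w`. -/
def margY {n : ℕ} (p : (Fin n → X) → ℝ) (w : (Fin n → X) → (Fin n → Option X) → ℝ)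
    (y : Fin n → Option X) : ℝ :=
  ∑ x : Fin n → X, p x * w x y

/-- The mutual information `I(X_K; Y)` under the joint law induced by `p` and `w`,
expressed as the KL divergence between the joint law of `(X_K, Y)` and the product of
its marginals. -/
def mutualInfoKY {n : ℕ} (p : (Fin n → X) → ℝ)
    (w : (Fin n → X) → (Fin n → Option X) → ℝ) (K : Finset (Fin n)) : ℝ :=
  klDiv (jointKY p w K) (fun z => margK p K z.1 * margY p w z.2)

/-!
Write `P` for the joint law of `(X_K, Y)` under `p`, and `P_K`, `P_Y` for its marginals. Under `q`
the joint law factors as `q_{X_K} ⊗ q_Y`, so pointwise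
`log (P / (P_K P_Y)) = log (P / (q_K q_Y)) - log (P_K / q_K) - log (P_Y / q_Y)`
wherever `P > 0`. Averaging against `P` turns the last two terms into `D(P_K ‖ q_K)` and
`D(P_Y ‖ q_Y)`. All logarithms are of positive numbers: positivity of `q` and nonnegativity of `w`
make the support of `P` lie inside that of the `q`-joint law.
-/

theorem mul_log_div_mul_eq (t : ℝ) {a b c d : ℝ} (ha : a ≠ 0) (hb : b ≠ 0) (hc : c ≠ 0)
    (hd : d ≠ 0) :
    t * Real.log (t / (a * b))
      = t * Real.log (t / (c * d)) - t * Real.log (a / c) - t * Real.log (b / d) := by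
  rcases eq_or_ne t 0 with rfl | ht
  · simp
  rw [Real.log_div ht (mul_ne_zero ha hb), Real.log_div ht (mul_ne_zero hc hd),
    Real.log_div ha hc, Real.log_div hb hd, Real.log_mul ha hb, Real.log_mul hc hd]
  ring

section Marginals

variable {A B : Type} [Fintype A] [Fintype B]

theorem sum_mul_comp_fst (P : A × B → ℝ) (f : A → ℝ) :
    ∑ a, (∑ b, P (a, b)) * f a = ∑ z, P z * f z.1 := by
  simp only [Fintype.sum_prod_type, Finset.sum_mul]

theorem sum_mul_comp_snd (P : A × B → ℝ) (f : B → ℝ) :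
    ∑ b, (∑ a, P (a, b)) * f b = ∑ z, P z * f z.2 := by
  simp only [Fintype.sum_prod_type_right, Finset.sum_mul]

theorem klDiv_prod_marginals_eq (P : A × B → ℝ) (QA : A → ℝ) (QB : B → ℝ) (hP : 0 ≤ P)
    (hPQ : ∀ z, P z ≠ 0 → QA z.1 * QB z.2 ≠ 0) :
    klDiv P (fun z => (∑ b, P (z.1, b)) * ∑ a, P (a, z.2))
      = klDiv P (fun z => QA z.1 * QB z.2)
          - klDiv (fun a => ∑ b, P (a, b)) QA - klDiv (fun b => ∑ a, P (a, b)) QB := by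
  unfold klDiv
  rw [sum_mul_comp_fst, sum_mul_comp_snd, ← Finset.sum_sub_distrib, ← Finset.sum_sub_distrib]
  refine Finset.sum_congr rfl fun z _ => ?_
  rcases eq_or_ne (P z) 0 with hz | hz
  · simp [hz]
  have hpos : 0 < P z := (hP z).lt_of_ne' hz
  have hfst : 0 < ∑ b, P (z.1, b) :=
    hpos.trans_le (Finset.single_le_sum (fun b _ => hP (z.1, b)) (Finset.mem_univ z.2))
  have hsnd : 0 < ∑ a, P (a, z.2) :=
    hpos.trans_le (Finset.single_le_sum (fun a _ => hP (a, z.2)) (Finset.mem_univ z.1))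
  obtain ⟨hQA, hQB⟩ := mul_ne_zero_iff.mp (hPQ z hz)
  exact mul_log_div_mul_eq _ hfst.ne' hsnd.ne' hQA hQB

end Marginals

section Mechanism

variable {n : ℕ} {K : Finset (Fin n)}
  {w : (Fin n → X) → (Fin n → Option X) → ℝ}

theorem jointKY_nonneg {p : (Fin n → X) → ℝ} (hp : ∀ x, 0 ≤ p x) (hw : ∀ x y, 0 ≤ w x y)
    (z : (↥K → X) × (Fin n → Option X)) : 0 ≤ jointKY p w K z :=
  Finset.sum_nonneg fun x _ => by
    split_ifs
    exacts [mul_nonneg (hp x) (hw x z.2), le_rfl]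

theorem sum_jointKY_snd (p : (Fin n → X) → ℝ) (hw : ∀ x, ∑ y, w x y = 1) (u : ↥K → X) :
    ∑ y, jointKY p w K (u, y) = margK p K u := by
  unfold jointKY margK
  rw [Finset.sum_comm]
  refine Finset.sum_congr rfl fun x _ => ?_
  split_ifs <;> simp [← Finset.mul_sum, hw x]

theorem sum_jointKY_fst (p : (Fin n → X) → ℝ) (y : Fin n → Option X) :
    ∑ u, jointKY p w K (u, y) = margY p w y := by
  unfold jointKY margY
  rw [Finset.sum_comm]
  simp [Finset.sum_ite_eq]

theorem jointKY_ne_zero_of_pos {p q : (Fin n → X) → ℝ} (hq : ∀ x, 0 < q x)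
    (hw : ∀ x y, 0 ≤ w x y) {z : (↥K → X) × (Fin n → Option X)} (hz : jointKY p w K z ≠ 0) :
    jointKY q w K z ≠ 0 := by
  obtain ⟨x, -, hx⟩ := Finset.exists_ne_zero_of_sum_ne_zero hz
  have hres : restr K x = z.1 := by
    by_contra h
    simp [h] at hx
  rw [if_pos hres] at hx
  have hwx : 0 < w x z.2 := (hw x z.2).lt_of_ne' (right_ne_zero_of_mul hx)
  have hqz : 0 < jointKY q w K z :=
    Finset.sum_pos' (fun x' _ => by
      split_ifs
      exacts [mul_nonneg (hq x').le (hw x' z.2), le_rfl])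
      ⟨x, Finset.mem_univ x, by rw [if_pos hres]; exact mul_pos (hq x) hwx⟩
  exact hqz.ne'

end Mechanism

theorem mismatch_identity_general {n : ℕ} (K : Finset (Fin n))
    (q : (Fin n → X) → ℝ) (hq0 : ∀ x, 0 < q x)
    (w : (Fin n → X) → (Fin n → Option X) → ℝ)
    (hw0 : ∀ x y, 0 ≤ w x y) (hw1 : ∀ x, ∑ y : Fin n → Option X, w x y = 1)
    (hqpriv : ∀ z : (↥K → X) × (Fin n → Option X),
      jointKY q w K z = margK q K z.1 * margY q w z.2)
    (p : (Fin n → X) → ℝ) (hp0 : ∀ x, 0 ≤ p x) :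
    mutualInfoKY p w K
      = klDiv (jointKY p w K) (jointKY q w K)
          - klDiv (margK p K) (margK q K)
          - klDiv (margY p w) (margY q w) := by
  have hK : margK p K = fun u => ∑ y, jointKY p w K (u, y) :=
    funext fun u => (sum_jointKY_snd p hw1 u).symm
  have hY : margY p w = fun y => ∑ u, jointKY p w K (u, y) :=
    funext fun y => (sum_jointKY_fst p y).symm
  unfold mutualInfoKY
  rw [hK, hY, funext hqpriv]
  exact klDiv_prod_marginals_eq _ _ _ (jointKY_nonneg hp0 hw0)
    fun z hz => hqpriv z ▸ jointKY_ne_zero_of_pos hq0 hw0 hz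

/-- mismatch identity: let `q` be a full-support pmf on `𝒳^n` and `w` a
mechanism whose output `Y` is independent of `X_K` under `q(x)·w(y|x)`.  For any other
pmf `p` on `𝒳^n`, the mutual information of `(X_K, Y)` under `p(x)·w(y|x)` satisfies
`I_p(X_K; Y) = D(p_{X_K,Y} ‖ q_{X_K,Y}) − D(p_{X_K} ‖ q_{X_K}) − D(p_Y ‖ q_Y)`. -/
theorem mismatch_identity {n : ℕ} (hn : 1 ≤ n) (hX : 2 ≤ Fintype.card X)
    (K : Finset (Fin n))
    (q : (Fin n → X) → ℝ) (hq0 : ∀ x, 0 < q x) (hq1 : ∑ x : Fin n → X, q x = 1)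
    (w : (Fin n → X) → (Fin n → Option X) → ℝ)
    (hw0 : ∀ x y, 0 ≤ w x y) (hw1 : ∀ x, ∑ y : Fin n → Option X, w x y = 1)
    (hqpriv : ∀ z : (↥K → X) × (Fin n → Option X),
      jointKY q w K z = margK q K z.1 * margY q w z.2)
    (p : (Fin n → X) → ℝ) (hp0 : ∀ x, 0 ≤ p x) (hp1 : ∑ x : Fin n → X, p x = 1) :
    mutualInfoKY p w K
      = klDiv (jointKY p w K) (jointKY q w K)
          - klDiv (margK p K) (margK q K)
          - klDiv (margY p w) (margY q w) :=
  mismatch_identity_general K q hq0 w hw0 hw1 hqpriv p hp0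

end GenotypeHiding
end
end

section
/- Greedy erasure matches hitting sets: given a universe U = {1,…,m}, nonempty subsets S_1,…,S_k ⊆ U with ⋃_j S_j = U, and any hitting set V for {S_1,…,S_k}, there exists an ordering o_1,…,o_m of U (namely one that visits all elements of U \ V before any element of V) such that the greedy erasure set satisfies E_π ⊆ V, and hence |E_π| ≤ |V|. Combined with the fact that every greedy erasure set is a hitting set, the minimum of |E_π| over all orderings equals the minimum cardinality of a hitting set for {S_1,…,S_k}. -/
open Finset
open scoped Classical

noncomputable section

namespace GenotypeHiding

/-- One pass of the greedy erasure process: visiting the elements of the list in order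
with `R` the set of already visited, non-erased elements and `E` the set of erased
elements, the element `v` currently visited is erased iff some set `S j` is entirely
contained in the visited non-erased elements together with `v`. -/
def greedyAux {m k : ℕ} (S : Fin k → Finset (Fin m)) :
    List (Fin m) → Finset (Fin m) → Finset (Fin m) → Finset (Fin m)
  | [], _, E => E
  | v :: rest, R, E =>
      if ∃ j : Fin k, S j ⊆ insert v R then greedyAux S rest R (insert v E)
      else greedyAux S rest (insert v R) E

/-- The greedy erasure set `E_π` produced by visiting the elements in the order given by
the list `o`. -/
def greedyErasure {m k : ℕ} (S : Fin k → Finset (Fin m)) (o : List (Fin m)) :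
    Finset (Fin m) :=
  greedyAux S o ∅ ∅

/-- `V` is a hitting set for `{S_1, …, S_k}`. -/
def IsHittingSet {m k : ℕ} (S : Fin k → Finset (Fin m)) (V : Finset (Fin m)) : Prop :=
  ∀ j : Fin k, (V ∩ S j).Nonempty

section

variable {m k : ℕ} (S : Fin k → Finset (Fin m))

theorem greedyAux_subset_union :
    ∀ (l : List (Fin m)) (R E : Finset (Fin m)), greedyAux S l R E ⊆ E ∪ l.toFinset
  | [], _, _ => by simp [greedyAux]
  | v :: rest, R, E => by
    rw [greedyAux]
    split_ifs
    · refine (greedyAux_subset_union rest R (insert v E)).trans ?_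
      simp only [List.toFinset_cons, insert_union, union_insert, subset_refl]
    · exact (greedyAux_subset_union rest (insert v R) E).trans
        (union_subset_union_right (by simp))

theorem greedyAux_append_of_forall_not_subset (l₁ l₂ : List (Fin m)) (R E : Finset (Fin m))
    (h : ∀ j, ¬ S j ⊆ R ∪ l₁.toFinset) :
    greedyAux S (l₁ ++ l₂) R E = greedyAux S l₂ (R ∪ l₁.toFinset) E := by
  induction l₁ generalizing R with
  | nil => simp
  | cons w rest ih =>
    have hR : R ∪ (w :: rest).toFinset = insert w R ∪ rest.toFinset := by
      simp [insert_union, union_insert]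
    rw [hR] at h ⊢
    have hkeep : ¬ ∃ j, S j ⊆ insert w R := fun ⟨j, hj⟩ ↦
      h j (hj.trans subset_union_left)
    rw [List.cons_append, greedyAux, if_neg hkeep, ih _ h]

/-- The last visited element of `S j` is erased unless an earlier one already was. -/
theorem inter_greedyAux_nonempty (j : Fin k) :
    ∀ (l : List (Fin m)) (R E : Finset (Fin m)),
      S j ⊆ R ∪ E ∪ l.toFinset → ¬ S j ⊆ R → (S j ∩ greedyAux S l R E).Nonempty
  | [], R, E, hcover, hR => by
    obtain ⟨v, hvS, hvR⟩ := not_subset.1 hR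
    have hvE : v ∈ E := by simpa [hvR] using hcover hvS
    exact ⟨v, mem_inter.2 ⟨hvS, by simpa [greedyAux] using hvE⟩⟩
  | w :: rest, R, E, hcover, hR => by
    have hcover' : S j ⊆ R ∪ E ∪ insert w rest.toFinset := by simpa using hcover
    rw [greedyAux]
    split_ifs with hw
    · refine inter_greedyAux_nonempty j rest R (insert w E) (hcover'.trans ?_) hR
      intro x; simp only [mem_union, mem_insert, List.mem_toFinset]; tauto
    · refine inter_greedyAux_nonempty j rest (insert w R) E (hcover'.trans ?_)
        fun h ↦ hw ⟨j, h⟩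
      intro x; simp only [mem_union, mem_insert, List.mem_toFinset]; tauto

theorem greedyErasure_isHittingSet (hS : ∀ j, (S j).Nonempty) {o : List (Fin m)}
    (ho : ∀ v, v ∈ o) : IsHittingSet S (greedyErasure S o) := by
  intro j
  rw [inter_comm]
  refine inter_greedyAux_nonempty S j o ∅ ∅ (fun v _ ↦ by simp [ho v]) ?_
  simpa [subset_empty, ← not_nonempty_iff_eq_empty] using hS j

/-- The complement of a hitting set contains no `S j`, so nothing in it is erased. -/
theorem greedyErasure_compl_append_subset {W : Finset (Fin m)} (hW : IsHittingSet S W) :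
    greedyErasure S (Wᶜ.toList ++ W.toList) ⊆ W := by
  have hskip : ∀ j, ¬ S j ⊆ ∅ ∪ Wᶜ.toList.toFinset := fun j hj ↦ by
    obtain ⟨x, hx⟩ := hW j
    simpa [(mem_inter.1 hx).1] using hj (mem_inter.1 hx).2
  rw [greedyErasure, greedyAux_append_of_forall_not_subset S _ _ _ _ hskip]
  simpa using greedyAux_subset_union S W.toList _ ∅

theorem nodup_toList_compl_append_toList (W : Finset (Fin m)) :
    (Wᶜ.toList ++ W.toList).Nodup :=
  (nodup_toList _).append (nodup_toList _) fun _ hx hx' ↦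
    (mem_compl.1 (mem_toList.1 hx)) (mem_toList.1 hx')

theorem mem_toList_compl_append_toList (W : Finset (Fin m)) (v : Fin m) :
    v ∈ Wᶜ.toList ++ W.toList := by
  by_cases hv : v ∈ W <;> simp [hv]

end

theorem greedyErasure_matches_hittingSet_general {m k : ℕ}
    (S : Fin k → Finset (Fin m))
    (hSne : ∀ j, (S j).Nonempty)
    (V : Finset (Fin m)) (hV : IsHittingSet S V) :
    (∃ o : List (Fin m), o.Nodup ∧ (∀ v : Fin m, v ∈ o) ∧
      greedyErasure S o ⊆ V ∧ (greedyErasure S o).card ≤ V.card) ∧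
    sInf {c : ℕ | ∃ o : List (Fin m), o.Nodup ∧ (∀ v : Fin m, v ∈ o) ∧
          (greedyErasure S o).card = c}
      = sInf {c : ℕ | ∃ W : Finset (Fin m), IsHittingSet S W ∧ W.card = c} := by
  have hVsub := greedyErasure_compl_append_subset S hV
  refine ⟨⟨_, nodup_toList_compl_append_toList V, mem_toList_compl_append_toList V,
    hVsub, card_le_card hVsub⟩, csInf_eq_csInf_of_forall_exists_le ?_ ?_⟩
  · rintro _ ⟨o, -, ho, rfl⟩
    exact ⟨_, ⟨_, greedyErasure_isHittingSet S hSne ho, rfl⟩, le_rfl⟩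
  · rintro _ ⟨W, hW, rfl⟩
    exact ⟨_, ⟨_, nodup_toList_compl_append_toList W, mem_toList_compl_append_toList W, rfl⟩,
      card_le_card (greedyErasure_compl_append_subset S hW)⟩

/-- greedy erasure matches hitting sets: for any hitting set `V` there is
an ordering of the universe (one visiting all of `U \ V` before any element of `V`)
whose greedy erasure set is contained in `V`, hence has cardinality at most `|V|`.
Combined with the fact that every greedy erasure set is a hitting set, the minimum of
`|E_π|` over all orderings equals the minimum cardinality of a hitting set. -/
theorem greedyErasure_matches_hittingSet {m k : ℕ} (hm : 1 ≤ m) (hk : 1 ≤ k)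
    (S : Fin k → Finset (Fin m))
    (hSne : ∀ j, (S j).Nonempty)
    (hScover : ∀ v : Fin m, ∃ j, v ∈ S j)
    (V : Finset (Fin m)) (hV : IsHittingSet S V) :
    (∃ o : List (Fin m), o.Nodup ∧ (∀ v : Fin m, v ∈ o) ∧
      greedyErasure S o ⊆ V ∧ (greedyErasure S o).card ≤ V.card) ∧
    sInf {c : ℕ | ∃ o : List (Fin m), o.Nodup ∧ (∀ v : Fin m, v ∈ o) ∧
          (greedyErasure S o).card = c}
      = sInf {c : ℕ | ∃ W : Finset (Fin m), IsHittingSet S W ∧ W.card = c} :=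
  greedyErasure_matches_hittingSet_general S hSne V hV

end GenotypeHiding
end
end

section
/- Hidden-state transition identity under sensitive conditioning: for a hidden Markov model, for every 2 ≤ i ≤ n, every pair of states s, s' ∈ 𝒮, and every u ∈ 𝒳^{|K|} with P(S_{i−1} = s, X_K = u) > 0, one has P(S_i = s' | S_{i−1} = s, X_K = u) = π(s, s') · γ^{(i)}(u, s') / ∑_{t∈𝒮} π(s, t) · γ^{(i)}(u, t), where γ^{(i)}(u, t) := P(X_{K_{i+}} = u_+ | S_i = t). -/
open Finset
open scoped Classical

noncomputable section

namespace GenotypeHiding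

variable {S X : Type} [Fintype S] [DecidableEq S] [Fintype X] [DecidableEq X]

/-- The joint law of the hidden states `(S_1, …, S_n)` and the emissions `(X_1, …, X_n)`
of a hidden Markov model with initial distribution `μ`, transition probabilities `π` and
emission probabilities `q`:
`P(s, x) = μ(s_1) ∏_i π(s_i, s_{i+1}) ∏_i q(x_i | s_i)`. -/
def hmmJoint {n : ℕ} (hn : 0 < n) (μ : S → ℝ) (π : S → S → ℝ) (q : S → X → ℝ)
    (s : Fin n → S) (x : Fin n → X) : ℝ :=
  μ (s ⟨0, hn⟩)
    * (∏ i : Fin n, if h : (i : ℕ) + 1 < n then π (s i) (s ⟨(i : ℕ) + 1, h⟩) else 1)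
    * ∏ i : Fin n, q (s i) (x i)

/-- `P(S_i = t)` in the hidden Markov model. -/
def hmmPrS {n : ℕ} (hn : 0 < n) (μ : S → ℝ) (π : S → S → ℝ) (q : S → X → ℝ)
    (i : Fin n) (t : S) : ℝ :=
  ∑ s : Fin n → S, ∑ x : Fin n → X,
    if s i = t then hmmJoint hn μ π q s x else 0

/-- `P(X_{K_{i+}} = u_+, S_i = t)` in the hidden Markov model, where
`K_{i+} = K ∩ {i, …, n}` and `u_+` is the corresponding subvector of `u`. -/
def hmmPrKplusS {n : ℕ} (hn : 0 < n) (μ : S → ℝ) (π : S → S → ℝ) (q : S → X → ℝ)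
    (K : Finset (Fin n)) (i : Fin n) (u : Fin n → X) (t : S) : ℝ :=
  ∑ s : Fin n → S, ∑ x : Fin n → X,
    if (∀ j ∈ K, (i : ℕ) ≤ (j : ℕ) → x j = u j) ∧ s i = t then
      hmmJoint hn μ π q s x else 0

/-- `γ^{(i)}(u, t) = P(X_{K_{i+}} = u_+ | S_i = t)`. -/
def hmmGamma {n : ℕ} (hn : 0 < n) (μ : S → ℝ) (π : S → S → ℝ) (q : S → X → ℝ)
    (K : Finset (Fin n)) (i : Fin n) (u : Fin n → X) (t : S) : ℝ :=
  hmmPrKplusS hn μ π q K i u t / hmmPrS hn μ π q i t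

/-- `P(S_{i-1} = s₀, X_K = u)` in the hidden Markov model. -/
def hmmPrSK {n : ℕ} (hn : 0 < n) (μ : S → ℝ) (π : S → S → ℝ) (q : S → X → ℝ)
    (K : Finset (Fin n)) (i : Fin n) (s₀ : S) (u : Fin n → X) : ℝ :=
  ∑ s : Fin n → S, ∑ x : Fin n → X,
    if s i = s₀ ∧ (∀ j ∈ K, x j = u j) then hmmJoint hn μ π q s x else 0

/-- `P(S_i = s₁, S_{i-1} = s₀, X_K = u)` in the hidden Markov model. -/
def hmmPrSSK {n : ℕ} (hn : 0 < n) (μ : S → ℝ) (π : S → S → ℝ) (q : S → X → ℝ)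
    (K : Finset (Fin n)) (i i' : Fin n) (s₀ s₁ : S) (u : Fin n → X) : ℝ :=
  ∑ s : Fin n → S, ∑ x : Fin n → X,
    if s i = s₀ ∧ s i' = s₁ ∧ (∀ j ∈ K, x j = u j) then hmmJoint hn μ π q s x else 0

set_option linter.unusedSectionVars false

/-!
Given `S_i`, the trajectory before time `i` and the one after it are independent: two
trajectories that agree at time `i` may exchange their futures without changing the product
of their likelihoods. Summing this over pairs of trajectories gives
`P(S_{i-1} = s₀, S_i = t, X_K = u) P(S_i = t)
  = P(S_{i-1} = s₀, S_i = t, X_{K ∩ [0,i)} = u) P(X_{K_{i+}} = u_+, S_i = t)`.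
In the first factor on the right the coordinates after time `i` are summed out one at a time,
since every row of `π` and of `q` sums to one; what remains is `π(s₀, t)` times a quantity
that does not depend on `t`. Summing over `t` normalises the identity.
-/

section CoordinateSums

variable {ι β : Type} [DecidableEq ι]

theorem update_funSplitAt_symm (k : ι) (a b : β) (r : {j // j ≠ k} → β) :
    Function.update ((Equiv.funSplitAt k β).symm (a, r)) k b
      = (Equiv.funSplitAt k β).symm (b, r) := by
  funext j
  by_cases h : j = k
  · subst h; simp [Equiv.funSplitAt, Equiv.piSplitAt]
  · simp [Equiv.funSplitAt, Equiv.piSplitAt, h]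

variable [Fintype ι] [Fintype β]

theorem sum_sum_update {M : Type} [AddCommMonoid M] (k : ι) (F : (ι → β) → M) :
    ∑ g : ι → β, ∑ b : β, F (Function.update g k b) = Fintype.card β • ∑ g, F g := by
  let e := Equiv.funSplitAt k β
  rw [← e.symm.sum_comp, ← e.symm.sum_comp F, Fintype.sum_prod_type]
  simp only [update_funSplitAt_symm, e]
  rw [Finset.sum_const, Finset.card_univ, Fintype.sum_prod_type_right]

/-- The factor `Fintype.card β` accounts for the coordinate `g k`, which is summed over freely
on the right. -/
theorem card_mul_sum_mul_apply {R : Type} [CommSemiring R] (k : ι) (A : (ι → β) → R)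
    (W : (ι → β) → β → R) (hA : ∀ g b, A (Function.update g k b) = A g)
    (hW : ∀ g b, W (Function.update g k b) = W g) (hW1 : ∀ g, ∑ b, W g b = 1) :
    Fintype.card β * ∑ g, A g * W g (g k) = ∑ g, A g := by
  rw [← nsmul_eq_mul, ← sum_sum_update k]
  simp only [hA, hW, Function.update_self, ← Finset.mul_sum, hW1, mul_one]

end CoordinateSums

theorem piecewise_piecewise_swap {α β : Type} (t : Set α) [∀ j, Decidable (j ∈ t)]
    (f g : α → β) : t.piecewise (t.piecewise f g) (t.piecewise g f) = f := by
  funext j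
  by_cases h : j ∈ t <;> simp [Set.piecewise, h]

theorem prod_ite_mul_prod_ite {ι M : Type} [Fintype ι] [CommMonoid M] (p : ι → Prop)
    [DecidablePred p] (f g : ι → M) :
    (∏ j, if p j then f j else g j) * (∏ j, if p j then g j else f j)
      = (∏ j, f j) * ∏ j, g j := by
  simp only [← Finset.prod_mul_distrib]
  refine Finset.prod_congr rfl fun j _ => ?_
  split_ifs
  · rfl
  · exact mul_comm _ _

theorem prod_eq_mul_prod_of_ne {ι M : Type} [Fintype ι] [CommMonoid M] {f g : ι → M} (a : ι)
    (c : M) (ha : f a = c * g a) (hne : ∀ j ≠ a, f j = g j) : ∏ j, f j = c * ∏ j, g j := by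
  rw [← Finset.mul_prod_erase _ f (Finset.mem_univ a),
    ← Finset.mul_prod_erase _ g (Finset.mem_univ a), ha, mul_assoc,
    Finset.prod_congr rfl fun j hj => hne j (Finset.ne_of_mem_erase hj)]

section Markov

variable {n : ℕ}

theorem transition_piecewise_Iio {α M : Type} [One M] (π : α → α → M) {k : Fin n}
    {s s' : Fin n → α} (hs : s k = s' k) (j : Fin n) :
    (if h : (j : ℕ) + 1 < n then
        π ((Set.Iio k).piecewise s s' j) ((Set.Iio k).piecewise s s' ⟨(j : ℕ) + 1, h⟩) else 1)
      = if j < k then (if h : (j : ℕ) + 1 < n then π (s j) (s ⟨(j : ℕ) + 1, h⟩) else 1)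
        else (if h : (j : ℕ) + 1 < n then π (s' j) (s' ⟨(j : ℕ) + 1, h⟩) else 1) := by
  by_cases h : (j : ℕ) + 1 < n
  · simp only [dif_pos h, Set.piecewise, Set.mem_Iio, Fin.lt_def]
    rcases lt_trichotomy ((j : ℕ) + 1) k with hk | hk | hk
    · simp [show (j : ℕ) < k by omega, hk]
    · have hjk : (⟨(j : ℕ) + 1, h⟩ : Fin n) = k := Fin.ext hk
      simp [show (j : ℕ) < k by omega, hjk, hs]
    · simp [show ¬ (j : ℕ) < k by omega, hk.not_gt]
  · simp [dif_neg h]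

theorem emission_piecewise_Iio {α β M : Type} (q : α → β → M) (k : Fin n)
    (s s' : Fin n → α) (x x' : Fin n → β) (j : Fin n) :
    q ((Set.Iio k).piecewise s s' j) ((Set.Iio k).piecewise x x' j)
      = if j < k then q (s j) (x j) else q (s' j) (x' j) := by
  simp only [Set.piecewise, Set.mem_Iio]
  split_ifs <;> rfl

theorem hmmJoint_mul_hmmJoint_piecewise (hn : 0 < n) (μ : S → ℝ) (π : S → S → ℝ)
    (q : S → X → ℝ) {k : Fin n} (hk : 0 < (k : ℕ)) {s s' : Fin n → S} (hs : s k = s' k)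
    (x x' : Fin n → X) :
    hmmJoint hn μ π q s x * hmmJoint hn μ π q s' x'
      = hmmJoint hn μ π q ((Set.Iio k).piecewise s s') ((Set.Iio k).piecewise x x')
        * hmmJoint hn μ π q ((Set.Iio k).piecewise s' s) ((Set.Iio k).piecewise x' x) := by
  have h0 : (⟨0, hn⟩ : Fin n) ∈ Set.Iio k := Fin.lt_def.mpr hk
  simp only [hmmJoint, Set.piecewise_eq_of_mem _ _ _ h0, transition_piecewise_Iio π hs,
    transition_piecewise_Iio π hs.symm, emission_piecewise_Iio]
  have regroup : ∀ a b c a' b' c' : ℝ, a * b * c * (a' * b' * c') = a * a' * (b * b') * (c * c') :=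
    fun _ _ _ _ _ _ => by ring
  rw [regroup, regroup, prod_ite_mul_prod_ite, prod_ite_mul_prod_ite]

end Markov

/-- `P(S_i = s₀, S_{i'} = s₁, X_{K ∩ [0, i')} = u)`. -/
def hmmPrSSKbefore {n : ℕ} (hn : 0 < n) (μ : S → ℝ) (π : S → S → ℝ) (q : S → X → ℝ)
    (K : Finset (Fin n)) (i i' : Fin n) (s₀ s₁ : S) (u : Fin n → X) : ℝ :=
  ∑ s : Fin n → S, ∑ x : Fin n → X,
    if s i = s₀ ∧ s i' = s₁ ∧ (∀ j ∈ K, (j : ℕ) < (i' : ℕ) → x j = u j) then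
      hmmJoint hn μ π q s x else 0

theorem hmmPrSSK_mul_hmmPrS {n : ℕ} (hn : 0 < n) (μ : S → ℝ) (π : S → S → ℝ)
    (q : S → X → ℝ) (K : Finset (Fin n)) {i i' : Fin n} (hii' : i < i') (s₀ s₁ : S)
    (u : Fin n → X) :
    hmmPrSSK hn μ π q K i i' s₀ s₁ u * hmmPrS hn μ π q i' s₁
      = hmmPrSSKbefore hn μ π q K i i' s₀ s₁ u * hmmPrKplusS hn μ π q K i' u s₁ := by
  unfold hmmPrSSK hmmPrS hmmPrSSKbefore hmmPrKplusS
  simp only [← Fintype.sum_prod_type', Finset.sum_mul_sum]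
  let swap : ((Fin n → S) × (Fin n → X)) × ((Fin n → S) × (Fin n → X)) → _ := fun p =>
    (((Set.Iio i').piecewise p.1.1 p.2.1, (Set.Iio i').piecewise p.1.2 p.2.2),
     ((Set.Iio i').piecewise p.2.1 p.1.1, (Set.Iio i').piecewise p.2.2 p.1.2))
  have hswap : Function.Involutive swap := by
    rintro ⟨⟨s, x⟩, s', x'⟩
    simp only [swap, piecewise_piecewise_swap]
  refine Fintype.sum_equiv (hswap.toPerm swap) _ _ fun ⟨⟨s, x⟩, s', x'⟩ => ?_
  have hi : i ∈ Set.Iio i' := hii'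
  have hi' : i' ∉ Set.Iio i' := lt_irrefl i'
  simp only [Function.Involutive.coe_toPerm, swap, Set.piecewise_eq_of_mem _ _ _ hi,
    Set.piecewise_eq_of_notMem _ _ _ hi']
  rw [ite_zero_mul_ite_zero, ite_zero_mul_ite_zero]
  have hx : ∀ j : Fin n, (j : ℕ) < i' → (Set.Iio i').piecewise x x' j = x j :=
    fun j hj => Set.piecewise_eq_of_mem _ _ _ hj
  have hx' : ∀ j : Fin n, (i' : ℕ) ≤ j → (Set.Iio i').piecewise x' x j = x j :=
    fun j hj => Set.piecewise_eq_of_notMem _ _ _ (not_lt.mpr hj)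
  refine ite_congr (propext ?_) (fun h => ?_) fun _ => rfl
  · constructor
    · rintro ⟨⟨h₀, h₁, hK⟩, h₁'⟩
      exact ⟨⟨h₀, h₁', fun j hj hji => (hx j hji).trans (hK j hj)⟩,
        fun j hj hij => (hx' j hij).trans (hK j hj), h₁⟩
    · rintro ⟨⟨h₀, h₁', hbefore⟩, hafter, h₁⟩
      refine ⟨⟨h₀, h₁, fun j hj => ?_⟩, h₁'⟩
      rcases lt_or_ge (j : ℕ) i' with hji | hij
      · exact (hx j hji).symm.trans (hbefore j hj hji)
      · exact (hx' j hij).symm.trans (hafter j hj hij)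
  · exact hmmJoint_mul_hmmJoint_piecewise hn μ π q ((Nat.zero_le _).trans_lt hii')
      (h.2.2.trans h.1.2.1.symm) x x'

section Prefix

variable {n : ℕ} (hn : 0 < n) (μ : S → ℝ) (π : S → S → ℝ) (q : S → X → ℝ)

/-- The likelihood of the first `m` steps `(S_j, X_j)_{j < m}` of a trajectory. -/
def hmmPrefix (m : ℕ) (s : Fin n → S) (x : Fin n → X) : ℝ :=
  μ (s ⟨0, hn⟩)
    * (∏ j : Fin n, if h : (j : ℕ) + 1 < n ∧ (j : ℕ) + 1 < m then
        π (s j) (s ⟨(j : ℕ) + 1, h.1⟩) else 1)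
    * ∏ j : Fin n, if (j : ℕ) < m then q (s j) (x j) else 1

theorem hmmPrefix_self (s : Fin n → S) (x : Fin n → X) :
    hmmPrefix hn μ π q n s x = hmmJoint hn μ π q s x := by
  simp only [hmmPrefix, hmmJoint, and_self, Fin.is_lt, if_true]

theorem hmmPrefix_succ {k' k : Fin n} (hk : (k' : ℕ) + 1 = k) (s : Fin n → S) (x : Fin n → X) :
    hmmPrefix hn μ π q (k + 1) s x
      = hmmPrefix hn μ π q k s x * π (s k') (s k) * q (s k) (x k) := by
  have hT : (∏ j : Fin n, if h : (j : ℕ) + 1 < n ∧ (j : ℕ) + 1 < k + 1 then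
        π (s j) (s ⟨(j : ℕ) + 1, h.1⟩) else 1)
      = π (s k') (s k) * ∏ j : Fin n, if h : (j : ℕ) + 1 < n ∧ (j : ℕ) + 1 < k then
        π (s j) (s ⟨(j : ℕ) + 1, h.1⟩) else 1 := by
    refine prod_eq_mul_prod_of_ne k' _ ?_ fun j hj => ?_
    · have hk' : (⟨k' + 1, by omega⟩ : Fin n) = k := Fin.ext hk
      rw [dif_pos ⟨by omega, by omega⟩, dif_neg (by omega), hk', mul_one]
    · have : (j : ℕ) ≠ k' := fun h => hj (Fin.ext h)
      by_cases h : (j : ℕ) + 1 < n ∧ (j : ℕ) + 1 < k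
      · rw [dif_pos h, dif_pos ⟨h.1, by omega⟩]
      · rw [dif_neg h, dif_neg (by omega)]
  have hE : (∏ j : Fin n, if (j : ℕ) < k + 1 then q (s j) (x j) else 1)
      = q (s k) (x k) * ∏ j : Fin n, if (j : ℕ) < k then q (s j) (x j) else 1 := by
    refine prod_eq_mul_prod_of_ne k _ (by simp) fun j hj => ?_
    have : (j : ℕ) ≠ k := fun h => hj (Fin.ext h)
    by_cases h : (j : ℕ) < k
    · rw [if_pos h, if_pos (by omega)]
    · rw [if_neg h, if_neg (by omega)]
  rw [hmmPrefix, hmmPrefix, hT, hE]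
  ring

theorem hmmPrefix_update_state {m : ℕ} {k : Fin n} (hk : 0 < (k : ℕ)) (hmk : m ≤ k)
    (s : Fin n → S) (a : S) (x : Fin n → X) :
    hmmPrefix hn μ π q m (Function.update s k a) x = hmmPrefix hn μ π q m s x := by
  have hne : ∀ j : Fin n, (j : ℕ) < m → j ≠ k := fun j hj h => by omega
  simp only [hmmPrefix]
  congr 1
  · congr 1
    · rw [Function.update_of_ne (fun h : (⟨0, hn⟩ : Fin n) = k => by subst h; simp at hk)]
    · refine Finset.prod_congr rfl fun j _ => ?_
      by_cases h : (j : ℕ) + 1 < n ∧ (j : ℕ) + 1 < m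
      · rw [dif_pos h, dif_pos h, Function.update_of_ne (hne j (by omega)),
          Function.update_of_ne (hne _ h.2)]
      · rw [dif_neg h, dif_neg h]
  · refine Finset.prod_congr rfl fun j _ => ?_
    by_cases h : (j : ℕ) < m
    · rw [if_pos h, if_pos h, Function.update_of_ne (hne j h)]
    · rw [if_neg h, if_neg h]

theorem hmmPrefix_update_emission {m : ℕ} {k : Fin n} (hmk : m ≤ k) (s : Fin n → S)
    (x : Fin n → X) (b : X) :
    hmmPrefix hn μ π q m s (Function.update x k b) = hmmPrefix hn μ π q m s x := by
  simp only [hmmPrefix]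
  congr 1
  refine Finset.prod_congr rfl fun j _ => ?_
  by_cases h : (j : ℕ) < m
  · rw [if_pos h, if_pos h, Function.update_of_ne (fun h' => by subst h'; omega)]
  · rw [if_neg h, if_neg h]

end Prefix

section Marginal

variable {n : ℕ} (hn : 0 < n) (μ : S → ℝ) (π : S → S → ℝ) (q : S → X → ℝ)

theorem card_mul_sum_hmmPrefix_mul (hq1 : ∀ t, ∑ a : X, q t a = 1) {k : Fin n}
    (hk : 0 < (k : ℕ)) (A : (Fin n → S) → (Fin n → X) → ℝ)
    (hAs : ∀ s x a, A (Function.update s k a) x = A s x)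
    (hAx : ∀ s x b, A s (Function.update x k b) = A s x)
    (W : (Fin n → S) → S → ℝ) (hW : ∀ s a, W (Function.update s k a) = W s)
    (hW1 : ∀ s, ∑ a, W s a = 1) :
    Fintype.card S * Fintype.card X
        * ∑ s, ∑ x, A s x * (hmmPrefix hn μ π q k s x * W s (s k) * q (s k) (x k))
      = ∑ s, ∑ x, A s x * hmmPrefix hn μ π q k s x := by
  have hx : ∀ s, Fintype.card X
      * ∑ x, A s x * (hmmPrefix hn μ π q k s x * W s (s k) * q (s k) (x k))
      = (∑ x, A s x * hmmPrefix hn μ π q k s x) * W s (s k) := fun s => by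
    simp only [← mul_assoc, Finset.sum_mul]
    exact card_mul_sum_mul_apply k _ (fun _ => q (s k)) (fun x b => by
      rw [hAx, hmmPrefix_update_emission hn μ π q le_rfl]) (fun _ _ => rfl) fun _ => hq1 _
  rw [mul_assoc, Finset.mul_sum, Finset.sum_congr rfl fun s _ => hx s]
  refine card_mul_sum_mul_apply k _ W (fun s a => ?_) hW hW1
  simp only [hAs, hmmPrefix_update_state hn μ π q hk le_rfl]

theorem card_mul_sum_hmmPrefix_succ (hπ1 : ∀ t, ∑ t' : S, π t t' = 1)
    (hq1 : ∀ t, ∑ a : X, q t a = 1) {k' k : Fin n} (hk : (k' : ℕ) + 1 = k)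
    (A : (Fin n → S) → (Fin n → X) → ℝ)
    (hAs : ∀ s x a, A (Function.update s k a) x = A s x)
    (hAx : ∀ s x b, A s (Function.update x k b) = A s x) :
    Fintype.card S * Fintype.card X * ∑ s, ∑ x, A s x * hmmPrefix hn μ π q (k + 1) s x
      = ∑ s, ∑ x, A s x * hmmPrefix hn μ π q k s x := by
  simp only [hmmPrefix_succ hn μ π q hk]
  refine card_mul_sum_hmmPrefix_mul hn μ π q hq1 (by omega) A hAs hAx (fun s => π (s k'))
    (fun s a => ?_) fun s => hπ1 _
  rw [Function.update_of_ne fun h => by rw [h] at hk; omega]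

theorem card_pow_mul_sum_hmmJoint (hπ1 : ∀ t, ∑ t' : S, π t t' = 1)
    (hq1 : ∀ t, ∑ a : X, q t a = 1) {m : ℕ} (hm : 0 < m) (hmn : m ≤ n)
    (A : (Fin n → S) → (Fin n → X) → ℝ)
    (hAs : ∀ k : Fin n, m ≤ k → ∀ s x a, A (Function.update s k a) x = A s x)
    (hAx : ∀ k : Fin n, m ≤ k → ∀ s x b, A s (Function.update x k b) = A s x) :
    (Fintype.card S * Fintype.card X) ^ (n - m) * ∑ s, ∑ x, A s x * hmmJoint hn μ π q s x
      = ∑ s, ∑ x, A s x * hmmPrefix hn μ π q m s x := by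
  induction hmn using Nat.decreasingInduction with
  | self => simp [hmmPrefix_self]
  | of_succ m hmn ih =>
    have hstep := card_mul_sum_hmmPrefix_succ hn μ π q hπ1 hq1 (k' := ⟨m - 1, by omega⟩)
      (k := ⟨m, hmn⟩) (by simp; omega) A
      (hAs _ le_rfl) (hAx _ le_rfl)
    rw [← hstep, ← ih (by omega) (fun k hk => hAs k (by omega)) (fun k hk => hAx k (by omega)),
      show n - m = n - (m + 1) + 1 by omega, pow_succ]
    ring

theorem card_pow_mul_sum_ite_hmmJoint (hπ1 : ∀ t, ∑ t' : S, π t t' = 1)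
    (hq1 : ∀ t, ∑ a : X, q t a = 1) {k' k : Fin n} (hk : (k' : ℕ) + 1 = k) (t : S)
    (A : (Fin n → S) → (Fin n → X) → ℝ)
    (hAs : ∀ j : Fin n, (k : ℕ) ≤ j → ∀ s x a, A (Function.update s j a) x = A s x)
    (hAx : ∀ j : Fin n, (k : ℕ) ≤ j → ∀ s x b, A s (Function.update x j b) = A s x) :
    (Fintype.card S * Fintype.card X) ^ (n - k)
        * ∑ s, ∑ x, (if s k = t then A s x * hmmJoint hn μ π q s x else 0)
      = ∑ s, ∑ x, A s x * π (s k') t * hmmPrefix hn μ π q k s x := by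
  let W : (Fin n → S) → S → ℝ := fun _ a => if a = t then 1 else 0
  have hW : ∀ s x, (if s k = t then A s x * hmmPrefix hn μ π q (k + 1) s x else 0)
      = A s x * π (s k') t * (hmmPrefix hn μ π q k s x * W s (s k) * q (s k) (x k)) := by
    intro s x
    rw [hmmPrefix_succ hn μ π q hk]
    by_cases ht : s k = t
    · simp only [W, ht, if_true]
      ring
    · simp only [W, if_neg ht, mul_zero, zero_mul]
  have hne : ∀ j : Fin n, (k : ℕ) ≤ j → k' ≠ j := fun j hj h => by rw [h] at hk; omega
  rw [show n - k = n - (k + 1) + 1 by omega, pow_succ', mul_assoc]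
  simp only [← ite_zero_mul]
  rw [card_pow_mul_sum_hmmJoint hn μ π q hπ1 hq1 (by omega) k.isLt]
  · simp only [ite_zero_mul, hW]
    refine card_mul_sum_hmmPrefix_mul hn μ π q hq1 (by omega) _ (fun s x a => ?_)
      (fun s x b => ?_) W (fun _ _ => rfl) fun _ => by simp [W]
    · rw [hAs k le_rfl, Function.update_of_ne (hne k le_rfl)]
    · rw [hAx k le_rfl]
  · intro j hj s x a
    rw [hAs j (by omega), Function.update_of_ne (fun h : k = j => by rw [← h] at hj; omega)]
  · exact fun j hj s x b => by rw [hAx j (by omega)]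

end Marginal

theorem card_mul_card_ne_zero_of_sum_eq_one (q : S → X → ℝ) (hq1 : ∀ t, ∑ a : X, q t a = 1)
    (s₀ : S) : (Fintype.card S * Fintype.card X : ℝ) ≠ 0 := by
  obtain ⟨a, -, -⟩ := Finset.exists_ne_zero_of_sum_ne_zero ((hq1 s₀).symm ▸ one_ne_zero)
  have : Nonempty S := ⟨s₀⟩
  have : Nonempty X := ⟨a⟩
  exact mul_ne_zero (Nat.cast_ne_zero.mpr Fintype.card_ne_zero)
    (Nat.cast_ne_zero.mpr Fintype.card_ne_zero)

theorem exists_hmmPrSSKbefore_eq_mul {n : ℕ} (hn : 0 < n) (μ : S → ℝ) (π : S → S → ℝ)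
    (hπ1 : ∀ t, ∑ t' : S, π t t' = 1) (q : S → X → ℝ) (hq1 : ∀ t, ∑ a : X, q t a = 1)
    (K : Finset (Fin n)) {i' i : Fin n} (hi : (i' : ℕ) + 1 = i) (s₀ : S) (u : Fin n → X) :
    ∃ C, ∀ t, hmmPrSSKbefore hn μ π q K i' i s₀ t u = π s₀ t * C := by
  let A : (Fin n → S) → (Fin n → X) → ℝ := fun s x =>
    if s i' = s₀ ∧ ∀ j ∈ K, (j : ℕ) < i → x j = u j then 1 else 0
  have hAs : ∀ k : Fin n, (i : ℕ) ≤ k → ∀ s x a, A (Function.update s k a) x = A s x :=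
    fun k hk s x a => by
      simp only [A, Function.update_of_ne (fun h : i' = k => by rw [h] at hi; omega)]
  have hAx : ∀ k : Fin n, (i : ℕ) ≤ k → ∀ s x b, A s (Function.update x k b) = A s x :=
    fun k hk s x b => by
      have hx : ∀ j : Fin n, (j : ℕ) < i → Function.update x k b j = x j :=
        fun j hj => Function.update_of_ne (by rintro rfl; omega) _ _
      simp +contextual only [A, hx]
  have hD : ∀ t, hmmPrSSKbefore hn μ π q K i' i s₀ t u
      = ∑ s, ∑ x, if s i = t then A s x * hmmJoint hn μ π q s x else 0 := fun t => by
    unfold hmmPrSSKbefore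
    refine Finset.sum_congr rfl fun s _ => Finset.sum_congr rfl fun x _ => ?_
    simp only [A, ite_mul, one_mul, zero_mul]
    split_ifs <;> simp_all
  have hπA : ∀ t s x, A s x * π (s i') t = π s₀ t * A s x := fun t s x => by
    by_cases h : s i' = s₀ ∧ ∀ j ∈ K, (j : ℕ) < i → x j = u j
    · rw [h.1, mul_comm]
    · simp only [A, if_neg h, zero_mul, mul_zero]
  have hN := pow_ne_zero (n - i) (card_mul_card_ne_zero_of_sum_eq_one q hq1 s₀)
  refine ⟨((Fintype.card S * Fintype.card X : ℝ) ^ (n - i))⁻¹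
    * ∑ s, ∑ x, A s x * hmmPrefix hn μ π q i s x, fun t => ?_⟩
  rw [mul_left_comm, Finset.mul_sum, eq_inv_mul_iff_mul_eq₀ hN, hD,
    card_pow_mul_sum_ite_hmmJoint hn μ π q hπ1 hq1 hi t A hAs hAx]
  simp only [hπA, mul_assoc, Finset.mul_sum]

theorem hmmPrSK_eq_sum_hmmPrSSK {n : ℕ} (hn : 0 < n) (μ : S → ℝ) (π : S → S → ℝ)
    (q : S → X → ℝ) (K : Finset (Fin n)) (i i' : Fin n) (s₀ : S) (u : Fin n → X) :
    hmmPrSK hn μ π q K i s₀ u = ∑ t, hmmPrSSK hn μ π q K i i' s₀ t u := by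
  unfold hmmPrSK hmmPrSSK
  symm
  rw [Finset.sum_comm]
  refine Finset.sum_congr rfl fun s _ => ?_
  rw [Finset.sum_comm]
  refine Finset.sum_congr rfl fun x _ => ?_
  rw [Fintype.sum_eq_single (s i') fun t ht => if_neg fun h => ht h.2.1.symm]
  simp

/-- hidden-state transition identity under sensitive conditioning: for a
hidden Markov model with initial distribution `μ`, transitions `π` and emissions `q`, for
every `2 ≤ i ≤ n` (zero-based: `0 < i`), all states `s₀, s₁` and every `u` with
`P(S_{i-1} = s₀, X_K = u) > 0`:
`P(S_i = s₁ | S_{i-1} = s₀, X_K = u) = π(s₀, s₁) γ^{(i)}(u, s₁) / ∑_t π(s₀, t) γ^{(i)}(u, t)`,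
where `γ^{(i)}(u, t) = P(X_{K_{i+}} = u_+ | S_i = t)`. -/
theorem hmm_transition_identity {n : ℕ} (hn : 0 < n)
    (μ : S → ℝ)
    (π : S → S → ℝ) (hπ1 : ∀ t, ∑ t' : S, π t t' = 1)
    (q : S → X → ℝ) (hq1 : ∀ t, ∑ a : X, q t a = 1)
    (K : Finset (Fin n))
    (hposS : ∀ (i : Fin n) (t : S), 0 < hmmPrS hn μ π q i t)
    (i : Fin n) (hi : 0 < (i : ℕ)) (s₀ s₁ : S) (u : Fin n → X)
    (hpos : 0 < hmmPrSK hn μ π q K ⟨(i : ℕ) - 1, by omega⟩ s₀ u) :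
    hmmPrSSK hn μ π q K ⟨(i : ℕ) - 1, by omega⟩ i s₀ s₁ u
        / hmmPrSK hn μ π q K ⟨(i : ℕ) - 1, by omega⟩ s₀ u
      = π s₀ s₁ * hmmGamma hn μ π q K i u s₁
          / ∑ t : S, π s₀ t * hmmGamma hn μ π q K i u t := by
  obtain ⟨C, hC⟩ := exists_hmmPrSSKbefore_eq_mul hn μ π hπ1 q hq1 K
    (i' := ⟨(i : ℕ) - 1, by omega⟩) (Nat.sub_add_cancel hi) s₀ u
  have hjoint : ∀ t, hmmPrSSK hn μ π q K ⟨(i : ℕ) - 1, by omega⟩ i s₀ t u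
      = C * (π s₀ t * hmmGamma hn μ π q K i u t) := fun t => by
    rw [eq_div_of_mul_eq (hposS i t).ne'
      (hmmPrSSK_mul_hmmPrS hn μ π q K (Fin.lt_def.mpr (by simp; omega)) s₀ t u), hC, hmmGamma]
    ring
  have hmarg : hmmPrSK hn μ π q K ⟨(i : ℕ) - 1, by omega⟩ s₀ u
      = C * ∑ t, π s₀ t * hmmGamma hn μ π q K i u t := by
    rw [hmmPrSK_eq_sum_hmmPrSSK _ _ _ _ _ _ i, Finset.mul_sum]
    exact Finset.sum_congr rfl fun t _ => hjoint t
  have hC0 : C ≠ 0 := by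
    rintro rfl
    simp [hmarg] at hpos
  rw [hjoint, hmarg, mul_div_mul_left _ _ hC0]

end GenotypeHiding
end
end
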